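/- arXiv:2009.06769 — 5 statements merged into one kernel-verified Lean document; each statement's English description precedes it below -/
import Mathlib

section
/- Let A be a diagonalizable d×d real matrix with eigenvalues 0 < Λ₁ ≤ … ≤ Λ_d, and let F : [0,∞) × ℝᵈ → ℝᵈ be continuous and satisfy |F(t,x)| ≤ c*·|x|^{1+α} for all t ≥ 0 and |x| ≤ ε*, for some constants c*, ε*, α > 0. Suppose y ∈ C¹([0,∞), ℝᵈ) solves y' + A y = F(t,y) and y(t) → 0 as t → ∞. Then there exists C₁ > 0 such that |y(t)| ≤ C₁ e^{-Λ₁ t} for all t ≥ 0. -/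
/-!
Conjugating by `S` turns the system into `u' = S F(t, S⁻¹ u) - D u` with `D` diagonal, so the
energy satisfies `(‖u‖²)' ≤ -2 Λ₁ ‖u‖² + 2 K ‖u‖^(2+α)` for a constant `K` once `y` is small.
Since `u → 0`, the nonlinear term eventually absorbs only a fraction of the damping, which gives
decay at some rate `λ ∈ (2Λ₁/(2+α), Λ₁)`. With that rate the forcing `‖u‖^(2+α)` decays faster
than `exp (-2 Λ₁ t)`, and a second comparison argument gives the sharp rate `Λ₁`; on the
remaining compact interval `[0, T]` the bound holds by continuity.
-/

open Matrix Set Filter Topology Real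
open scoped RealInnerProductSpace

theorem mul_norm_sq_le_inner_diagonal {n : Type*} [Fintype n] [DecidableEq n] {d : n → ℝ} {Λ : ℝ}
    (h : ∀ i, Λ ≤ d i) (x : EuclideanSpace ℝ n) :
    Λ * ‖x‖ ^ 2 ≤ ⟪x, toEuclideanCLM (𝕜 := ℝ) (diagonal d) x⟫ := by
  rw [inner_toEuclideanCLM, EuclideanSpace.real_norm_sq_eq, Finset.mul_sum]
  simp only [dotProduct, mulVec_diagonal]
  exact Finset.sum_le_sum fun i _ => by nlinarith [sq_nonneg (x i), h i]

theorem inner_sub_diagonal_le {n : Type*} [Fintype n] [DecidableEq n] {d : n → ℝ} {Λ : ℝ}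
    (h : ∀ i, Λ ≤ d i) (x g : EuclideanSpace ℝ n) :
    ⟪x, g - toEuclideanCLM (𝕜 := ℝ) (diagonal d) x⟫ ≤ ‖g‖ * ‖x‖ - Λ * ‖x‖ ^ 2 := by
  rw [inner_sub_right, mul_comm ‖g‖]
  linarith [real_inner_le_norm x g, mul_norm_sq_le_inner_diagonal h x]

theorem norm_apply_le_of_norm_le_mul_rpow {E F G : Type*} [NormedAddCommGroup E]
    [NormedSpace ℝ E] [NormedAddCommGroup F] [NormedSpace ℝ F] [NormedAddCommGroup G]
    [NormedSpace ℝ G] (P : E →L[ℝ] F) (Q : G →L[ℝ] E) {c p : ℝ} (hc : 0 ≤ c) (hp : 0 ≤ p)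
    {g : E} {z : G} (hg : ‖g‖ ≤ c * ‖Q z‖ ^ p) : ‖P g‖ ≤ ‖P‖ * c * ‖Q‖ ^ p * ‖z‖ ^ p := by
  calc ‖P g‖ ≤ ‖P‖ * (c * ‖Q z‖ ^ p) := P.le_of_opNorm_le_of_le le_rfl hg
    _ ≤ ‖P‖ * (c * (‖Q‖ * ‖z‖) ^ p) := by gcongr; exact Q.le_opNorm z
    _ = ‖P‖ * c * ‖Q‖ ^ p * ‖z‖ ^ p := by
      rw [mul_rpow (norm_nonneg _) (norm_nonneg _)]; ring

theorem inner_sub_diagonal_le_of_norm_le_mul_rpow {n : Type*} [Fintype n] [DecidableEq n]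
    {d : n → ℝ} {Λ c α : ℝ} (h : ∀ i, Λ ≤ d i) (hc : 0 ≤ c) (hα : 0 < α)
    (P Q : EuclideanSpace ℝ n →L[ℝ] EuclideanSpace ℝ n) {x g : EuclideanSpace ℝ n}
    (hg : ‖g‖ ≤ c * ‖Q x‖ ^ (1 + α)) :
    ⟪x, P g - toEuclideanCLM (𝕜 := ℝ) (diagonal d) x⟫
      ≤ ‖P‖ * c * ‖Q‖ ^ (1 + α) * ‖x‖ ^ (2 + α) - Λ * ‖x‖ ^ 2 := by
  have hPg : ‖P g‖ ≤ ‖P‖ * c * ‖Q‖ ^ (1 + α) * ‖x‖ ^ (1 + α) :=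
    norm_apply_le_of_norm_le_mul_rpow P Q hc (by positivity) hg
  calc _ ≤ ‖P g‖ * ‖x‖ - Λ * ‖x‖ ^ 2 := inner_sub_diagonal_le h x _
    _ ≤ ‖P‖ * c * ‖Q‖ ^ (1 + α) * ‖x‖ ^ (1 + α) * ‖x‖ - Λ * ‖x‖ ^ 2 := by gcongr
    _ = ‖P‖ * c * ‖Q‖ ^ (1 + α) * ‖x‖ ^ (2 + α) - Λ * ‖x‖ ^ 2 := by
      rw [show (2 : ℝ) + α = 1 + α + 1 by ring, rpow_add_one' (norm_nonneg _) (by positivity),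
        mul_assoc]

theorem exists_exp_mul_le_of_deriv_add_mul_le {φ φ' : ℝ → ℝ} {T₀ μ ν M : ℝ} (hμν : μ < ν)
    (hM : 0 ≤ M) (hφ : ∀ t ∈ Ici T₀, HasDerivWithinAt φ (φ' t) (Ici T₀) t)
    (h : ∀ᶠ t in atTop, φ' t + μ * φ t ≤ M * exp (-ν * t)) :
    ∃ B, ∀ᶠ t in atTop, exp (μ * t) * φ t ≤ B := by
  obtain ⟨T, hT⟩ := ((eventually_ge_atTop T₀).and h).exists_forall_of_atTop
  have hT₀T : Ici T ⊆ Ici T₀ := Ici_subset_Ici.2 (hT T le_rfl).1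
  set ψ : ℝ → ℝ := fun t => exp (μ * t) * φ t + M / (ν - μ) * exp (-(ν - μ) * t)
  have hψ : ∀ t ∈ Ici T, HasDerivWithinAt ψ
      (exp (μ * t) * (φ' t + μ * φ t - M * exp (-ν * t))) (Ici T) t := by
    intro t ht
    have hφt := (hφ t (hT₀T ht)).mono hT₀T
    refine ((((hasDerivAt_id t).const_mul μ).exp.hasDerivWithinAt.mul hφt).add
      ((((hasDerivAt_id t).const_mul (-(ν - μ))).exp.hasDerivWithinAt).const_mul _)).congr_deriv ?_
    rw [id, show -(ν - μ) * t = μ * t + -ν * t by ring, exp_add]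
    field_simp [(sub_pos.2 hμν).ne']
    ring
  have hanti : AntitoneOn ψ (Ici T) := by
    refine antitoneOn_of_hasDerivWithinAt_nonpos (convex_Ici T)
      (f' := fun t => exp (μ * t) * (φ' t + μ * φ t - M * exp (-ν * t)))
      (fun t ht => (hψ t ht).continuousWithinAt) (fun t ht => ?_) (fun t ht => ?_)
    · rw [interior_Ici] at ht ⊢
      exact (hψ t (mem_Ici.2 (mem_Ioi.1 ht).le)).mono Ioi_subset_Ici_self
    · rw [interior_Ici] at ht
      exact mul_nonpos_of_nonneg_of_nonpos (exp_pos _).le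
        (sub_nonpos.2 (hT t (mem_Ioi.1 ht).le).2)
  refine ⟨ψ T, eventually_atTop.2 ⟨T, fun t ht => ?_⟩⟩
  have hrest : 0 ≤ M / (ν - μ) * exp (-(ν - μ) * t) :=
    mul_nonneg (div_nonneg hM (sub_pos.2 hμν).le) (exp_pos _).le
  have := hanti self_mem_Ici ht ht
  simp only [ψ] at this ⊢
  linarith

theorem le_mul_exp_neg_of_exp_mul_sq_le {a B μ t : ℝ} (ha : 0 ≤ a)
    (h : exp (2 * μ * t) * a ^ 2 ≤ B) : a ≤ √B * exp (-μ * t) := by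
  have hB : a * exp (μ * t) ≤ √B := by
    rw [le_sqrt (by positivity) ((by positivity : 0 ≤ exp (2 * μ * t) * a ^ 2).trans h)]
    calc (a * exp (μ * t)) ^ 2 = exp (2 * μ * t) * a ^ 2 := by rw [mul_pow, ← exp_nat_mul]; ring_nf
      _ ≤ B := h
  rw [neg_mul, exp_neg, le_mul_inv_iff₀ (exp_pos _)]
  exact hB

theorem exists_norm_le_mul_exp_of_inner_deriv_le {E : Type*} [NormedAddCommGroup E]
    [InnerProductSpace ℝ E] {u u' : ℝ → E} {T₀ Λ K α : ℝ} (hΛ : 0 < Λ) (hK : 0 ≤ K) (hα : 0 < α)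
    (hu : ∀ t ∈ Ici T₀, HasDerivWithinAt u (u' t) (Ici T₀) t) (hdecay : Tendsto u atTop (𝓝 0))
    (henergy : ∀ᶠ t in atTop, ⟪u t, u' t⟫ ≤ K * ‖u t‖ ^ (2 + α) - Λ * ‖u t‖ ^ 2) :
    ∃ C, ∀ᶠ t in atTop, ‖u t‖ ≤ C * exp (-Λ * t) := by
  have hφ : ∀ t ∈ Ici T₀, HasDerivWithinAt (‖u ·‖ ^ 2) (2 * ⟪u t, u' t⟫) (Ici T₀) t :=
    fun t ht => (hu t ht).norm_sq
  have hpow : ∀ t, ‖u t‖ ^ (2 + α) = ‖u t‖ ^ α * ‖u t‖ ^ 2 := fun t => by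
    rw [rpow_add' (norm_nonneg _) (by positivity), rpow_two, mul_comm]
  obtain ⟨lam, hlam_lo, hlam_hi⟩ : ∃ lam, 2 * Λ / (2 + α) < lam ∧ lam < Λ :=
    exists_between (by rw [div_lt_iff₀ (by positivity)]; nlinarith)
  -- Near `u = 0` the nonlinearity costs at most `Λ - lam` of the damping rate.
  have hsmall : ∀ᶠ t in atTop, K * ‖u t‖ ^ α ≤ Λ - lam := by
    have hlim : Tendsto (fun t => K * ‖u t‖ ^ α) atTop (𝓝 0) := by
      simpa [zero_rpow hα.ne'] using
        (hdecay.norm.rpow_const (Or.inr hα.le)).const_mul K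
    exact hlim.eventually_le_const (sub_pos.2 hlam_hi)
  obtain ⟨B₁, hB₁⟩ := exists_exp_mul_le_of_deriv_add_mul_le (μ := 2 * lam) (ν := 2 * lam + 1)
    (by linarith) le_rfl hφ <| by
      filter_upwards [henergy, hsmall] with t hE hS
      rw [hpow] at hE
      nlinarith [mul_le_mul_of_nonneg_right hS (sq_nonneg ‖u t‖)]
  have hrate : ∀ᶠ t in atTop, ‖u t‖ ≤ √B₁ * exp (-lam * t) :=
    hB₁.mono fun t h => le_mul_exp_neg_of_exp_mul_sq_le (norm_nonneg _) h
  -- At rate `lam` the nonlinearity decays faster than `exp (-2 Λ t)`, as `(2 + α) lam > 2 Λ`.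
  obtain ⟨B₂, hB₂⟩ := exists_exp_mul_le_of_deriv_add_mul_le (μ := 2 * Λ) (ν := (2 + α) * lam)
    (M := 2 * K * √B₁ ^ (2 + α)) (by rw [div_lt_iff₀ (by positivity)] at hlam_lo; linarith)
    (by positivity) hφ <| by
      filter_upwards [henergy, hrate] with t hE hR
      have hR' : ‖u t‖ ^ (2 + α) ≤ √B₁ ^ (2 + α) * exp (-((2 + α) * lam) * t) := by
        calc ‖u t‖ ^ (2 + α) ≤ (√B₁ * exp (-lam * t)) ^ (2 + α) :=
              rpow_le_rpow (norm_nonneg _) hR (by positivity)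
          _ = √B₁ ^ (2 + α) * exp (-((2 + α) * lam) * t) := by
              rw [mul_rpow (sqrt_nonneg _) (exp_pos _).le, ← exp_mul]; ring_nf
      nlinarith [mul_le_mul_of_nonneg_left hR' hK]
  exact ⟨√B₂, hB₂.mono fun t h => le_mul_exp_neg_of_exp_mul_sq_le (norm_nonneg _) h⟩

theorem exists_pos_forall_norm_le_mul_exp {F : Type*} [NormedAddCommGroup F] {f : ℝ → F} {Λ : ℝ}
    (hf : ContinuousOn f (Ici 0)) (h : ∃ C, ∀ᶠ t in atTop, ‖f t‖ ≤ C * exp (-Λ * t)) :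
    ∃ C₁ > 0, ∀ t ≥ (0 : ℝ), ‖f t‖ ≤ C₁ * exp (-Λ * t) := by
  obtain ⟨C, T, hT⟩ := h.imp fun _ => eventually_atTop.1
  have hg : ContinuousOn (fun t => ‖f t‖ * exp (Λ * t)) (Icc 0 T) :=
    ((hf.mono Icc_subset_Ici_self).norm).mul (by fun_prop)
  obtain ⟨B, hB⟩ := isCompact_Icc.bddAbove_image hg
  refine ⟨max (max C B) 1, by positivity, fun t ht => ?_⟩
  rw [neg_mul, exp_neg, le_mul_inv_iff₀ (exp_pos _)]
  rcases le_total t T with htT | hTt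
  · exact (hB ⟨t, ⟨ht, htT⟩, rfl⟩).trans ((le_max_right C B).trans (le_max_left _ _))
  · have := hT t hTt
    rw [neg_mul, exp_neg, le_mul_inv_iff₀ (exp_pos _)] at this
    exact this.trans ((le_max_left C B).trans (le_max_left _ _))

theorem stmt_7_general {d : ℕ} (A S : Matrix (Fin d) (Fin d) ℝ) (hS : IsUnit S.det)
    (d₀ : Fin d → ℝ) (hpos : ∀ i, 0 < d₀ i)
    (hA : A = S⁻¹ * Matrix.diagonal d₀ * S)
    (Λ₁ : ℝ) (hΛ₁ : (∀ i, Λ₁ ≤ d₀ i) ∧ ∃ i, d₀ i = Λ₁)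
    (F : ℝ → EuclideanSpace ℝ (Fin d) → EuclideanSpace ℝ (Fin d))
    (cstar εstar α : ℝ) (hc : 0 < cstar) (hε : 0 < εstar) (hα : 0 < α)
    (hFbound : ∀ t ≥ (0 : ℝ), ∀ x : EuclideanSpace ℝ (Fin d), ‖x‖ ≤ εstar →
      ‖F t x‖ ≤ cstar * ‖x‖ ^ (1 + α))
    (y : ℝ → EuclideanSpace ℝ (Fin d))
    (hy : ∀ t ∈ Ici (0 : ℝ),
      HasDerivWithinAt y (F t (y t) - Matrix.toEuclideanLin A (y t)) (Ici (0 : ℝ)) t)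
    (hdecay : Filter.Tendsto y Filter.atTop (nhds 0)) :
    ∃ C₁ > 0, ∀ t ≥ (0 : ℝ), ‖y t‖ ≤ C₁ * Real.exp (-Λ₁ * t) := by
  obtain ⟨hlb, i₀, hi₀⟩ := hΛ₁
  set P := toEuclideanCLM (𝕜 := ℝ) S
  set Q := toEuclideanCLM (𝕜 := ℝ) S⁻¹
  set D := toEuclideanCLM (𝕜 := ℝ) (diagonal d₀)
  have hQP : ∀ x, Q (P x) = x := fun x => by
    change (Q * P) x = x
    rw [← map_mul, nonsing_inv_mul S hS, map_one]; rfl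
  have hPA : ∀ x, P (toEuclideanLin A x) = D (P x) := fun x => by
    change (P * toEuclideanCLM (𝕜 := ℝ) A) x = (D * P) x
    rw [← map_mul, ← map_mul, hA, ← mul_assoc, ← mul_assoc, mul_nonsing_inv S hS, one_mul]
  have hu : ∀ t ∈ Ici 0, HasDerivWithinAt (fun t => P (y t)) (P (F t (y t)) - D (P (y t)))
      (Ici 0) t := fun t ht =>
    (P.hasFDerivAt.comp_hasDerivWithinAt t (hy t ht)).congr_deriv (by simp [hPA])
  have henergy : ∀ᶠ t in atTop, ⟪P (y t), P (F t (y t)) - D (P (y t))⟫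
      ≤ ‖P‖ * cstar * ‖Q‖ ^ (1 + α) * ‖P (y t)‖ ^ (2 + α) - Λ₁ * ‖P (y t)‖ ^ 2 := by
    filter_upwards [eventually_ge_atTop 0, hdecay.norm.eventually_le_const (by simpa using hε)]
      with t ht hyt
    exact inner_sub_diagonal_le_of_norm_le_mul_rpow hlb hc.le hα P Q
      (by rw [hQP]; exact hFbound t ht _ hyt)
  obtain ⟨C, hC⟩ := exists_norm_le_mul_exp_of_inner_deriv_le (hi₀ ▸ hpos i₀) (by positivity) hα hu
    (map_zero P ▸ (P.continuous.tendsto 0).comp hdecay) henergy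
  refine exists_pos_forall_norm_le_mul_exp (fun t ht => (hy t ht).continuousWithinAt)
    ⟨‖Q‖ * C, hC.mono fun t hCt => ?_⟩
  calc ‖y t‖ = ‖Q (P (y t))‖ := by rw [hQP]
    _ ≤ ‖Q‖ * ‖P (y t)‖ := Q.le_opNorm _
    _ ≤ ‖Q‖ * (C * exp (-Λ₁ * t)) := by gcongr
    _ = ‖Q‖ * C * exp (-Λ₁ * t) := by ring

/-- Upper bound `|y(t)| ≤ C₁ e^{-Λ₁ t}` for a decaying solution of `y' + Ay = F(t,y)`,
where `A` is diagonalizable with positive eigenvalues and smallest eigenvalue `Λ₁`. -/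
theorem stmt_7 {d : ℕ} (A S : Matrix (Fin d) (Fin d) ℝ) (hS : IsUnit S.det)
    (d₀ : Fin d → ℝ) (hpos : ∀ i, 0 < d₀ i)
    (hA : A = S⁻¹ * Matrix.diagonal d₀ * S)
    (Λ₁ : ℝ) (hΛ₁ : (∀ i, Λ₁ ≤ d₀ i) ∧ ∃ i, d₀ i = Λ₁)
    (F : ℝ → EuclideanSpace ℝ (Fin d) → EuclideanSpace ℝ (Fin d))
    (hFcont : ContinuousOn (fun p : ℝ × EuclideanSpace ℝ (Fin d) => F p.1 p.2)
      (Ici (0 : ℝ) ×ˢ univ))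
    (cstar εstar α : ℝ) (hc : 0 < cstar) (hε : 0 < εstar) (hα : 0 < α)
    (hFbound : ∀ t ≥ (0 : ℝ), ∀ x : EuclideanSpace ℝ (Fin d), ‖x‖ ≤ εstar →
      ‖F t x‖ ≤ cstar * ‖x‖ ^ (1 + α))
    (y : ℝ → EuclideanSpace ℝ (Fin d))
    (hy : ∀ t ∈ Ici (0 : ℝ),
      HasDerivWithinAt y (F t (y t) - Matrix.toEuclideanLin A (y t)) (Ici (0 : ℝ)) t)
    (hdecay : Filter.Tendsto y Filter.atTop (nhds 0)) :
    ∃ C₁ > 0, ∀ t ≥ (0 : ℝ), ‖y t‖ ≤ C₁ * Real.exp (-Λ₁ * t) :=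
  stmt_7_general A S hS d₀ hpos hA Λ₁ hΛ₁ F cstar εstar α hc hε hα hFbound y hy hdecay
end

section
/- Let A be a diagonalizable d×d real matrix with eigenvalues 0 < Λ₁ ≤ … ≤ Λ_d, and let F : [0,∞) × ℝᵈ → ℝᵈ be continuous, locally Lipschitz in x, with F(t,0) = 0 for all t, and satisfy |F(t,x)| ≤ c*·|x|^{1+α} for all t ≥ 0 and |x| ≤ ε*, where c*, ε*, α > 0. Suppose y ∈ C¹([0,∞), ℝᵈ) solves y' + A y = F(t,y), with y(0) ≠ 0 and y(t) → 0 as t → ∞. Then for every ε > 0 there exists C₂ > 0 such that |y(t)| ≥ C₂ e^{-(Λ_d + ε)t} for all t ≥ 0. -/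
/-!
Conjugating by `S` turns the equation into `z' = S F(y) - D z` for `z = S y`, where `D` is
diagonal, so `‖D z‖ ≤ Λ_d ‖z‖`. Since `y → 0`, the superlinear term `S F(y)` is `o(‖z‖)`, hence
eventually `‖z'‖ ≤ (Λ_d + ε) ‖z‖`, and Grönwall's inequality run backwards in time gives
`‖z t‖ ≥ c e^{-(Λ_d + ε) t}` for large `t`. On the remaining compact interval `y` is bounded away
from zero, because a solution through `0` would vanish identically (backward uniqueness, again by
Grönwall near the first zero).
-/

open Matrix Set Filter Topology Asymptotics

theorem isLittleO_of_norm_le_mul_rpow {α E F : Type*} [NormedAddCommGroup E]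
    [NormedAddCommGroup F] {l : Filter α} {g : α → F} {y : α → E} {c p : ℝ} (hp : 0 < p)
    (hg : ∀ᶠ t in l, ‖g t‖ ≤ c * ‖y t‖ ^ (1 + p)) (hy : Tendsto y l (𝓝 0)) : g =o[l] y := by
  have hpow : (fun t => ‖y t‖ ^ p) =o[l] (fun _ => (1 : ℝ)) :=
    (isLittleO_one_iff ℝ).2 ((tendsto_zero_iff_norm_tendsto_zero.1 hy).rpow_const_nhds_zero hp)
  have hg' : g =O[l] (fun t => ‖y t‖ ^ p * ‖y t‖) := IsBigO.of_bound c <| hg.mono fun t ht => by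
    rwa [Real.norm_of_nonneg (by positivity), ← Real.rpow_add_one' (norm_nonneg _) (by positivity),
      add_comm]
  exact (hg'.trans_isLittleO (hpow.mul_isBigO (isBigO_refl _ l))).trans_isBigO
    (by simpa using (isBigO_norm_left (f' := y)).2 (isBigO_refl y l))

theorem exists_pos_mul_exp_le_of_eventually {g : ℝ → ℝ} {L c T : ℝ} (hL : 0 ≤ L)
    (hg : ContinuousOn g (Ici 0)) (hg_pos : ∀ t ≥ (0 : ℝ), 0 < g t) (hc : 0 < c)
    (hT : ∀ t ≥ T, c * Real.exp (-L * t) ≤ g t) :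
    ∃ C > 0, ∀ t ≥ (0 : ℝ), C * Real.exp (-L * t) ≤ g t := by
  obtain ⟨tm, htm, hmin⟩ := isCompact_Icc.exists_isMinOn (nonempty_Icc.2 (le_max_right T 0))
    (hg.mono fun t ht => ht.1)
  refine ⟨min (g tm) c, lt_min (hg_pos tm htm.1) hc, fun t ht => ?_⟩
  rcases le_total t (max T 0) with hle | hge
  · calc min (g tm) c * Real.exp (-L * t) ≤ min (g tm) c * 1 := by
          gcongr
          · exact (lt_min (hg_pos tm htm.1) hc).le
          · exact Real.exp_le_one_iff.2 (by nlinarith)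
      _ ≤ g tm := by simp
      _ ≤ g t := hmin ⟨ht, hle⟩
  · calc min (g tm) c * Real.exp (-L * t) ≤ c * Real.exp (-L * t) := by
          gcongr; exact min_le_right _ _
      _ ≤ g t := hT t ((le_max_left T 0).trans hge)

section

variable {E : Type*} [NormedAddCommGroup E] [NormedSpace ℝ E]

theorem norm_le_norm_mul_exp_of_norm_deriv_le {z z' : ℝ → E} {L a b : ℝ} (hab : a ≤ b)
    (hz : ContinuousOn z (Icc a b)) (hz' : ∀ t ∈ Ioc a b, HasDerivAt z (z' t) t)
    (hbound : ∀ t ∈ Ioc a b, ‖z' t‖ ≤ L * ‖z t‖) :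
    ‖z a‖ ≤ ‖z b‖ * Real.exp (L * (b - a)) := by
  have hmaps : MapsTo (fun s => b - s) (Icc 0 (b - a)) (Icc a b) := fun s hs =>
    ⟨by linarith [hs.2], by linarith [hs.1]⟩
  have hmem : ∀ s ∈ Ico 0 (b - a), b - s ∈ Ioc a b := fun s hs =>
    ⟨by linarith [hs.2], by linarith [hs.1]⟩
  have hreversed := norm_le_gronwallBound_of_norm_deriv_right_le (f := fun s => z (b - s))
    (f' := fun s => -z' (b - s)) (δ := ‖z b‖) (K := L) (ε := 0)
    (hz.comp (continuous_const.sub continuous_id).continuousOn hmaps)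
    (fun s hs => by
      simpa [Function.comp_def] using
        ((hz' _ (hmem s hs)).scomp s ((hasDerivAt_id s).const_sub b)).hasDerivWithinAt)
    (by simp) (fun s hs => by simpa using hbound _ (hmem s hs)) (b - a) ⟨by linarith, le_rfl⟩
  simpa [gronwallBound_ε0] using hreversed

/-- Backward uniqueness at the zero solution, for an equation that is linearly bounded near `0`. -/
theorem ne_zero_of_norm_deriv_le_mul_norm {f f' : ℝ → E} {L r : ℝ} (hr : 0 < r)
    (hf : ∀ t ∈ Ici (0 : ℝ), HasDerivWithinAt f (f' t) (Ici 0) t)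
    (hbound : ∀ t ≥ (0 : ℝ), ‖f t‖ < r → ‖f' t‖ ≤ L * ‖f t‖) (h0 : f 0 ≠ 0) :
    ∀ t ≥ (0 : ℝ), f t ≠ 0 := by
  have hcont : ContinuousOn f (Ici 0) := fun t ht => (hf t ht).continuousWithinAt
  by_contra! ⟨τ, hτ, hfτ⟩
  set Z := Ici (0 : ℝ) ∩ f ⁻¹' {0}
  have hZbdd : BddBelow Z := ⟨0, fun t ht => ht.1⟩
  have hZclosed : IsClosed Z :=
    hcont.preimage_isClosed_of_isClosed isClosed_Ici isClosed_singleton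
  have ht₀ : sInf Z ∈ Z := hZclosed.csInf_mem ⟨τ, hτ, hfτ⟩ hZbdd
  set t₀ := sInf Z
  have hft₀ : f t₀ = 0 := ht₀.2
  have ht₀_pos : 0 < t₀ := ht₀.1.lt_of_ne fun h => h0 (h ▸ hft₀)
  have hnear : ∀ᶠ t in 𝓝[<] t₀, 0 < t ∧ ‖f t‖ < r :=
    nhdsWithin_le_nhds ((lt_mem_nhds ht₀_pos).and
      ((hcont.continuousAt (Ici_mem_nhds ht₀_pos)).norm.eventually_lt_const (by simpa [hft₀])))
  obtain ⟨a, ha, hIco⟩ := mem_nhdsLT_iff_exists_Ico_subset.1 hnear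
  have ha_pos : 0 < a := (hIco ⟨le_rfl, ha⟩).1
  have hfa : ‖f a‖ ≤ ‖f t₀‖ * Real.exp (L * (t₀ - a)) :=
    norm_le_norm_mul_exp_of_norm_deriv_le ha.le
      (hcont.mono fun t ht => ha_pos.le.trans ht.1)
      (fun t ht => (hf t (ha_pos.trans ht.1).le).hasDerivAt (Ici_mem_nhds (ha_pos.trans ht.1)))
      (fun t ht => hbound t (ha_pos.trans ht.1).le <| by
        rcases ht.2.lt_or_eq with h | h
        · exact (hIco ⟨ht.1.le, h⟩).2
        · simpa [h, hft₀] using hr)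
  have haZ : a ∈ Z := ⟨ha_pos.le, by simpa [hft₀] using hfa⟩
  exact (csInf_le hZbdd haZ).not_gt ha

theorem exists_pos_mul_exp_le_norm {z z' : ℝ → E} {L : ℝ} (hL : 0 ≤ L)
    (hz : ∀ t ∈ Ici (0 : ℝ), HasDerivWithinAt z (z' t) (Ici 0) t)
    (hne : ∀ t ≥ (0 : ℝ), z t ≠ 0) (hbound : ∀ᶠ t in atTop, ‖z' t‖ ≤ L * ‖z t‖) :
    ∃ C > 0, ∀ t ≥ (0 : ℝ), C * Real.exp (-L * t) ≤ ‖z t‖ := by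
  have hcont : ContinuousOn z (Ici 0) := fun t ht => (hz t ht).continuousWithinAt
  obtain ⟨T₀, hT₀⟩ := eventually_atTop.1 hbound
  set T := max T₀ 0
  have hT : 0 ≤ T := le_max_right _ _
  refine exists_pos_mul_exp_le_of_eventually hL hcont.norm (fun t ht => norm_pos_iff.2 (hne t ht))
    (mul_pos (norm_pos_iff.2 (hne T hT)) (Real.exp_pos (L * T))) (T := T) fun t ht => ?_
  have hgron := norm_le_norm_mul_exp_of_norm_deriv_le ht (hcont.mono fun s hs => hT.trans hs.1)
    (fun s hs => (hz s (hT.trans hs.1.le)).hasDerivAt (Ici_mem_nhds (hT.trans_lt hs.1)))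
    (fun s hs => hT₀ s ((le_max_left _ _).trans hs.1.le))
  rw [mul_assoc, ← Real.exp_add, show L * T + -L * t = -(L * (t - T)) by ring, Real.exp_neg,
    ← div_eq_mul_inv, div_le_iff₀ (Real.exp_pos _)]
  exact hgron

theorem ne_zero_of_hasDerivWithinAt_sub_clm {F : ℝ → E → E} {L : E →L[ℝ] E} {y : ℝ → E}
    {r : ℝ} {K : NNReal} (hr : 0 < r)
    (hK : ∀ t ≥ (0 : ℝ), LipschitzOnWith K (F t) (Metric.ball 0 r))
    (hF0 : ∀ t ≥ (0 : ℝ), F t 0 = 0)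
    (hy : ∀ t ∈ Ici (0 : ℝ), HasDerivWithinAt y (F t (y t) - L (y t)) (Ici 0) t) (hy0 : y 0 ≠ 0) :
    ∀ t ≥ (0 : ℝ), y t ≠ 0 := by
  refine ne_zero_of_norm_deriv_le_mul_norm hr hy (L := K + ‖L‖) (fun t ht hyt => ?_) hy0
  have hF : ‖F t (y t)‖ ≤ K * ‖y t‖ := by
    simpa [hF0 t ht] using (hK t ht).dist_le_mul (y t) (by simpa using hyt) 0
      (Metric.mem_ball_self hr)
  linarith [norm_sub_le (F t (y t)) (L (y t)), L.le_opNorm (y t)]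

theorem eventually_norm_sub_le_of_isLittleO {g z : ℝ → E} {D : E →L[ℝ] E} {Λ ε : ℝ}
    (hD : ∀ x, ‖D x‖ ≤ Λ * ‖x‖) (hg : g =o[atTop] z) (hε : 0 < ε) :
    ∀ᶠ t in atTop, ‖g t - D (z t)‖ ≤ (Λ + ε) * ‖z t‖ :=
  (hg.bound hε).mono fun t ht => by linarith [norm_sub_le (g t) (D (z t)), hD (z t)]

theorem exists_pos_mul_exp_le_norm_of_clm {F : Type*} [NormedAddCommGroup F] [NormedSpace ℝ F]
    {y : ℝ → E} (T : E →L[ℝ] F) {C L : ℝ} (hC : 0 < C)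
    (hT : ∀ t ≥ (0 : ℝ), C * Real.exp (-L * t) ≤ ‖T (y t)‖) :
    ∃ C' > 0, ∀ t ≥ (0 : ℝ), C' * Real.exp (-L * t) ≤ ‖y t‖ := by
  have hT_pos : 0 < ‖T‖ := pos_of_mul_pos_left
    (((mul_pos hC (Real.exp_pos _)).trans_le (hT 0 le_rfl)).trans_le (T.le_opNorm _))
    (norm_nonneg (y 0))
  refine ⟨C / ‖T‖, div_pos hC hT_pos, fun t ht => ?_⟩
  rw [div_mul_eq_mul_div, div_le_iff₀ hT_pos, mul_comm ‖y t‖]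
  exact (hT t ht).trans (T.le_opNorm (y t))

end

section toEuclideanCLM

variable {𝕜 n : Type*} [RCLike 𝕜] [Fintype n] [DecidableEq n]

theorem toEuclideanCLM_nonsing_inv_apply_apply {S : Matrix n n 𝕜} (hS : IsUnit S.det)
    (x : EuclideanSpace 𝕜 n) : toEuclideanCLM (𝕜 := 𝕜) S⁻¹ (toEuclideanCLM (𝕜 := 𝕜) S x) = x := by
  rw [← mul_apply_eq_comp, ← map_mul, nonsing_inv_mul S hS, map_one, one_apply_eq_self]

theorem toEuclideanCLM_apply_toEuclideanLin_of_eq_conj {A S D : Matrix n n 𝕜} (hS : IsUnit S.det)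
    (hA : A = S⁻¹ * D * S) (x : EuclideanSpace 𝕜 n) :
    toEuclideanCLM (𝕜 := 𝕜) S (toEuclideanLin A x) =
      toEuclideanCLM (𝕜 := 𝕜) D (toEuclideanCLM (𝕜 := 𝕜) S x) := by
  have hSA : S * A = D * S := by
    rw [hA, ← Matrix.mul_assoc, ← Matrix.mul_assoc, mul_nonsing_inv S hS, Matrix.one_mul]
  change toEuclideanCLM (𝕜 := 𝕜) S (toEuclideanCLM (𝕜 := 𝕜) A x) = _
  rw [← mul_apply_eq_comp, ← mul_apply_eq_comp, ← map_mul, ← map_mul, hSA]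

end toEuclideanCLM

open scoped Matrix.Norms.L2Operator in
theorem norm_toEuclideanCLM_diagonal_apply_le {n : Type*} [Fintype n] [DecidableEq n]
    {v : n → ℝ} {Λ : ℝ} (hΛ : 0 ≤ Λ) (hv : ∀ i, |v i| ≤ Λ) (x : EuclideanSpace ℝ n) :
    ‖toEuclideanCLM (𝕜 := ℝ) (diagonal v) x‖ ≤ Λ * ‖x‖ := by
  refine (ContinuousLinearMap.le_opNorm _ x).trans (mul_le_mul_of_nonneg_right ?_ (norm_nonneg x))
  rw [l2_opNorm_toEuclideanCLM, l2_opNorm_diagonal, pi_norm_le_iff_of_nonneg hΛ]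
  exact hv

theorem stmt_8_general {d : ℕ} (A S : Matrix (Fin d) (Fin d) ℝ) (hS : IsUnit S.det)
    (d₀ : Fin d → ℝ) (hpos : ∀ i, 0 < d₀ i)
    (hA : A = S⁻¹ * Matrix.diagonal d₀ * S)
    (Λd : ℝ) (hΛd : (∀ i, d₀ i ≤ Λd) ∧ ∃ i, d₀ i = Λd)
    (F : ℝ → EuclideanSpace ℝ (Fin d) → EuclideanSpace ℝ (Fin d))
    (hFlip : ∀ x₀ : EuclideanSpace ℝ (Fin d), ∃ (r : ℝ) (K : NNReal), 0 < r ∧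
      ∀ t ≥ (0 : ℝ), LipschitzOnWith K (F t) (Metric.ball x₀ r))
    (hF0 : ∀ t ≥ (0 : ℝ), F t 0 = 0)
    (cstar εstar α : ℝ) (hε : 0 < εstar) (hα : 0 < α)
    (hFbound : ∀ t ≥ (0 : ℝ), ∀ x : EuclideanSpace ℝ (Fin d), ‖x‖ ≤ εstar →
      ‖F t x‖ ≤ cstar * ‖x‖ ^ (1 + α))
    (y : ℝ → EuclideanSpace ℝ (Fin d))
    (hy : ∀ t ∈ Ici (0 : ℝ),
      HasDerivWithinAt y (F t (y t) - Matrix.toEuclideanLin A (y t)) (Ici (0 : ℝ)) t)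
    (hy0 : y 0 ≠ 0)
    (hdecay : Filter.Tendsto y Filter.atTop (nhds 0)) :
    ∀ ε > (0 : ℝ), ∃ C₂ > 0, ∀ t ≥ (0 : ℝ),
      C₂ * Real.exp (-(Λd + ε) * t) ≤ ‖y t‖ := by
  intro ε hε_pos
  obtain ⟨hΛ_ge, i₀, rfl⟩ := hΛd
  set SL := toEuclideanCLM (𝕜 := ℝ) S
  set DL := toEuclideanCLM (𝕜 := ℝ) (diagonal d₀)
  have hinv (x) : toEuclideanCLM (𝕜 := ℝ) S⁻¹ (SL x) = x :=
    toEuclideanCLM_nonsing_inv_apply_apply hS x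
  have hconj (x) : SL (toEuclideanLin A x) = DL (SL x) :=
    toEuclideanCLM_apply_toEuclideanLin_of_eq_conj hS hA x
  have hy_ne : ∀ t ≥ (0 : ℝ), y t ≠ 0 := by
    obtain ⟨r, K, hr, hK⟩ := hFlip 0
    exact ne_zero_of_hasDerivWithinAt_sub_clm (L := toEuclideanCLM (𝕜 := ℝ) A) hr hK hF0 hy hy0
  have hz_ne : ∀ t ≥ (0 : ℝ), SL (y t) ≠ 0 := fun t ht h =>
    hy_ne t ht (by rw [← hinv (y t), h, map_zero])
  have hz (t) (ht : t ∈ Ici (0 : ℝ)) :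
      HasDerivWithinAt (fun t => SL (y t)) (SL (F t (y t)) - DL (SL (y t))) (Ici 0) t := by
    simpa [hconj, Function.comp_def] using SL.hasFDerivAt.comp_hasDerivWithinAt t (hy t ht)
  have hFy : (fun t => F t (y t)) =o[atTop] y := isLittleO_of_norm_le_mul_rpow hα
    (((eventually_ge_atTop 0).and
      ((tendsto_zero_iff_norm_tendsto_zero.1 hdecay).eventually_le_const hε)).mono
        fun t ht => hFbound t ht.1 (y t) ht.2) hdecay
  have hy_isBigO : y =O[atTop] fun t => SL (y t) := by
    simpa only [hinv] using
      (toEuclideanCLM (𝕜 := ℝ) S⁻¹).isBigO_comp (fun t => SL (y t)) atTop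
  have hD (x) : ‖DL x‖ ≤ d₀ i₀ * ‖x‖ := norm_toEuclideanCLM_diagonal_apply_le (hpos i₀).le
    (fun i => (abs_of_pos (hpos i)).trans_le (hΛ_ge i)) x
  obtain ⟨C, hC, hCz⟩ := exists_pos_mul_exp_le_norm (add_pos (hpos i₀) hε_pos).le hz hz_ne
    (eventually_norm_sub_le_of_isLittleO hD
      ((SL.isBigO_comp _ atTop).trans_isLittleO (hFy.trans_isBigO hy_isBigO)) hε_pos)
  exact exists_pos_mul_exp_le_norm_of_clm SL hC hCz

/-- Lower bound `|y(t)| ≥ C₂ e^{-(Λ_d+ε)t}` for a non-trivial decaying solution of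
`y' + Ay = F(t,y)`, where `Λ_d` is the largest eigenvalue of the diagonalizable
matrix `A` with positive eigenvalues. -/
theorem stmt_8 {d : ℕ} (A S : Matrix (Fin d) (Fin d) ℝ) (hS : IsUnit S.det)
    (d₀ : Fin d → ℝ) (hpos : ∀ i, 0 < d₀ i)
    (hA : A = S⁻¹ * Matrix.diagonal d₀ * S)
    (Λd : ℝ) (hΛd : (∀ i, d₀ i ≤ Λd) ∧ ∃ i, d₀ i = Λd)
    (F : ℝ → EuclideanSpace ℝ (Fin d) → EuclideanSpace ℝ (Fin d))
    (hFcont : ContinuousOn (fun p : ℝ × EuclideanSpace ℝ (Fin d) => F p.1 p.2)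
      (Ici (0 : ℝ) ×ˢ univ))
    (hFlip : ∀ x₀ : EuclideanSpace ℝ (Fin d), ∃ (r : ℝ) (K : NNReal), 0 < r ∧
      ∀ t ≥ (0 : ℝ), LipschitzOnWith K (F t) (Metric.ball x₀ r))
    (hF0 : ∀ t ≥ (0 : ℝ), F t 0 = 0)
    (cstar εstar α : ℝ) (hc : 0 < cstar) (hε : 0 < εstar) (hα : 0 < α)
    (hFbound : ∀ t ≥ (0 : ℝ), ∀ x : EuclideanSpace ℝ (Fin d), ‖x‖ ≤ εstar →
      ‖F t x‖ ≤ cstar * ‖x‖ ^ (1 + α))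
    (y : ℝ → EuclideanSpace ℝ (Fin d))
    (hy : ∀ t ∈ Ici (0 : ℝ),
      HasDerivWithinAt y (F t (y t) - Matrix.toEuclideanLin A (y t)) (Ici (0 : ℝ)) t)
    (hy0 : y 0 ≠ 0)
    (hdecay : Filter.Tendsto y Filter.atTop (nhds 0)) :
    ∀ ε > (0 : ℝ), ∃ C₂ > 0, ∀ t ≥ (0 : ℝ),
      C₂ * Real.exp (-(Λd + ε) * t) ≤ ‖y t‖ :=
  stmt_8_general A S hS d₀ hpos hA Λd hΛd F hFlip hF0 cstar εstar α hε hα hFbound y hy hy0 hdecay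
end

section
/- Let A be a diagonalizable d×d real matrix with positive eigenvalues and let F : [0,∞) × ℝᵈ → ℝᵈ be continuous, locally Lipschitz in x, satisfying |F(t,x)| ≤ c*·|x|^{1+α} for all t ≥ 0 and |x| ≤ ε*, for some c*, ε*, α > 0. If y ∈ C¹([0,∞), ℝᵈ) solves y' + A y = F(t,y), with y(0) ≠ 0 and y(t) → 0 as t → ∞, then there exist an eigenvalue λ* of A, a corresponding eigenvector ξ* ≠ 0 with Aξ* = λ*ξ*, and δ > 0 such that |y(t) − e^{-λ* t} ξ*| = O(e^{-(λ* + δ)t}) as t → ∞. -/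
/-!
In coordinates `z = S y` with `S A S⁻¹ = D` diagonal, the energy `‖z‖²` satisfies
`-2(‖D‖ + ε)‖z‖² ≤ (‖z‖²)' ≤ -2(min dᵢ - ε)‖z‖²` once `z` is small: so `z` decays exponentially,
never vanishes, and cannot decay faster than `e^{-(‖D‖ + ε)t}`. If `z = O(e^{-μt})`, the forcing
`g = S F(t, y)` is `O(e^{-νt})` with `ν = (1 + α)μ`, and variation of constants in each coordinate
`zᵢ' = gᵢ - dᵢ zᵢ` gives `zᵢ = ℓᵢ e^{-dᵢ t} + O(e^{-μ't})` for every `μ' < ν`, where `ℓᵢ = 0` unless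
`dᵢ < ν`. Either some `ℓᵢ ≠ 0`, and the least such `dᵢ` together with the vector of the `ℓⱼ` with
`dⱼ = dᵢ` is the eigenpair, or the decay rate improves by a factor close to `1 + α`; as the rate is
bounded, the first case occurs after finitely many steps.
-/

open Matrix Set

open Real Filter Topology Asymptotics MeasureTheory
open scoped InnerProductSpace

section ExpBounds

variable {E : Type*} [NormedAddCommGroup E] {f : ℝ → E} {μ : ℝ}

lemma isBigO_exp_of_bound {K T : ℝ} (h : ∀ t ≥ T, ‖f t‖ ≤ K * exp (-μ * t)) :
    f =O[atTop] fun t => exp (-μ * t) :=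
  IsBigO.of_bound K <| (eventually_ge_atTop T).mono fun t ht => by
    simpa only [norm_of_nonneg (exp_pos _).le] using h t ht

lemma Asymptotics.IsBigO.exists_bound_exp (h : f =O[atTop] fun t => exp (-μ * t)) :
    ∃ K > 0, ∃ T, ∀ t ≥ T, ‖f t‖ ≤ K * exp (-μ * t) := by
  obtain ⟨K, hK, hKf⟩ := h.exists_pos
  obtain ⟨T, hT⟩ := eventually_atTop.1 hKf.bound
  exact ⟨K, hK, T, fun t ht => by simpa only [norm_of_nonneg (exp_pos _).le] using hT t ht⟩

lemma isBigO_exp_neg_mul_of_le {ν : ℝ} (h : μ ≤ ν) :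
    (fun t => exp (-ν * t)) =O[atTop] fun t => exp (-μ * t) :=
  isBigO_exp_of_bound (K := 1) (T := 0) fun t ht => by
    rw [norm_of_nonneg (exp_pos _).le, one_mul, exp_le_exp]
    nlinarith

end ExpBounds

section ExpIntegration

variable {E : Type*} [NormedAddCommGroup E] [NormedSpace ℝ E] {w ψ : ℝ → E} {K γ T : ℝ}

theorem exists_norm_sub_le_of_norm_deriv_le [CompleteSpace E] (hγ : 0 < γ)
    (hw : ∀ s > T, HasDerivAt w (ψ s) s) (hψ : ContinuousOn ψ (Ioi T))
    (hψK : ∀ s > T, ‖ψ s‖ ≤ K * exp (-γ * s)) :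
    ∃ ℓ, ∀ t > T, ‖w t - ℓ‖ ≤ K / γ * exp (-γ * t) := by
  have hint (t : ℝ) (ht : T ≤ t) : IntegrableOn ψ (Ioi t) :=
    Integrable.mono' ((exp_neg_integrableOn_Ioi t hγ).const_mul K)
      ((hψ.mono (Ioi_subset_Ioi ht)).aestronglyMeasurable measurableSet_Ioi)
      ((ae_restrict_iff' measurableSet_Ioi).2 (.of_forall fun s hs => hψK s (ht.trans_lt hs)))
  refine ⟨limUnder atTop w, fun t ht => ?_⟩
  rw [norm_sub_rev, ← integral_Ioi_of_hasDerivAt_of_tendsto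
    (hw t ht).continuousAt.continuousWithinAt (fun s hs => hw s (ht.trans hs)) (hint t ht.le)
    (tendsto_limUnder_of_hasDerivAt_of_integrableOn_Ioi hw (hint T le_rfl))]
  refine (norm_integral_le_of_norm_le ((exp_neg_integrableOn_Ioi t hγ).const_mul K)
    ((ae_restrict_iff' measurableSet_Ioi).2 (.of_forall fun s hs =>
      hψK s (ht.trans hs)))).trans_eq ?_
  rw [integral_const_mul, integral_exp_mul_Ioi (by linarith)]
  field_simp

theorem norm_le_add_mul_exp_of_norm_deriv_le (hγ : 0 < γ) (hK : 0 ≤ K)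
    (hw : ∀ s ≥ T, HasDerivAt w (ψ s) s) (hψK : ∀ s ≥ T, ‖ψ s‖ ≤ K * exp (γ * s)) :
    ∀ t ≥ T, ‖w t‖ ≤ ‖w T‖ + K / γ * exp (γ * t) := fun t ht =>
  image_norm_le_of_norm_deriv_right_le_deriv_boundary (f' := ψ)
    (B := fun s => ‖w T‖ + K / γ * exp (γ * s)) (B' := fun s => K * exp (γ * s))
    (fun s hs => (hw s hs.1).continuousAt.continuousWithinAt)
    (fun s hs => (hw s hs.1).hasDerivWithinAt) (le_add_of_nonneg_right (by positivity))
    (fun s => ((((hasDerivAt_id' s).const_mul γ).exp.const_mul (K / γ)).const_add _).congr_deriv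
      (by field_simp))
    (fun s hs => hψK s hs.1) ⟨ht, le_rfl⟩

end ExpIntegration

section Duhamel

variable {u φ : ℝ → ℝ} {a ν T : ℝ}

lemma hasDerivAt_exp_mul_of_hasDerivAt {t : ℝ} (hu : HasDerivAt u (φ t - a * u t) t) :
    HasDerivAt (fun s => exp (a * s) * u s) (exp (a * t) * φ t) t := by
  refine (((hasDerivAt_id' t).const_mul a).exp.fun_mul hu).congr_deriv ?_
  ring

lemma norm_exp_mul_le {s x K : ℝ} (h : ‖x‖ ≤ K * exp (-ν * s)) :
    ‖exp (a * s) * x‖ ≤ K * exp (-(ν - a) * s) := by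
  rw [norm_mul, norm_of_nonneg (exp_pos _).le]
  calc exp (a * s) * ‖x‖ ≤ exp (a * s) * (K * exp (-ν * s)) := by gcongr
    _ = K * exp (-(ν - a) * s) := by rw [mul_left_comm, ← exp_add]; ring_nf

lemma exp_neg_mul_mul_exp_mul (t x : ℝ) : exp (-a * t) * (exp (a * t) * x) = x := by
  rw [← mul_assoc, ← exp_add, neg_mul, neg_add_cancel, exp_zero, one_mul]

theorem exists_sub_mul_exp_isBigO_of_lt (hu : ∀ t > T, HasDerivAt u (φ t - a * u t) t)
    (hφ : ContinuousOn φ (Ioi T)) (hφO : φ =O[atTop] fun t => exp (-ν * t)) (haν : a < ν) :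
    ∃ ℓ, (fun t => u t - ℓ * exp (-a * t)) =O[atTop] fun t => exp (-ν * t) := by
  obtain ⟨K, -, T₁, hT₁⟩ := hφO.exists_bound_exp
  obtain ⟨ℓ, hℓ⟩ := exists_norm_sub_le_of_norm_deriv_le (w := fun s => exp (a * s) * u s)
    (T := max T₁ T) (sub_pos.2 haν)
    (fun s hs => hasDerivAt_exp_mul_of_hasDerivAt (hu s ((le_max_right _ _).trans_lt hs)))
    ((continuous_const.mul continuous_id).rexp.continuousOn.mul
      (hφ.mono (Ioi_subset_Ioi (le_max_right _ _))))
    (fun s hs => norm_exp_mul_le (hT₁ s ((le_max_left _ _).trans hs.le)))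
  refine ⟨ℓ, isBigO_exp_of_bound (K := K / (ν - a)) (T := max T₁ T + 1) fun t ht => ?_⟩
  calc ‖u t - ℓ * exp (-a * t)‖ = exp (-a * t) * ‖exp (a * t) * u t - ℓ‖ := by
        rw [← norm_of_nonneg (exp_pos (-a * t)).le, ← norm_mul, mul_sub,
          exp_neg_mul_mul_exp_mul, mul_comm ℓ, norm_of_nonneg (exp_pos _).le]
    _ ≤ exp (-a * t) * (K / (ν - a) * exp (-(ν - a) * t)) := by
        gcongr
        exact hℓ t (by linarith)
    _ = K / (ν - a) * exp (-ν * t) := by rw [mul_left_comm, ← exp_add]; ring_nf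

theorem isBigO_exp_of_lt_of_lt (hu : ∀ t > T, HasDerivAt u (φ t - a * u t) t)
    (hφO : φ =O[atTop] fun t => exp (-ν * t)) {μ : ℝ} (hμa : μ < a) (hμν : μ < ν) :
    u =O[atTop] fun t => exp (-μ * t) := by
  obtain ⟨K, hK, T₁, hT₁⟩ := hφO.exists_bound_exp
  set T₀ := max (max T₁ 0) (T + 1)
  have hT₀T₁ : T₁ ≤ T₀ := (le_max_left _ _).trans (le_max_left _ _)
  have hT₀ : 0 ≤ T₀ := (le_max_right _ _).trans (le_max_left _ _)
  have hTT₀ : T < T₀ := by linarith [le_max_right (max T₁ 0) (T + 1)]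
  have hw := norm_le_add_mul_exp_of_norm_deriv_le (w := fun s => exp (a * s) * u s)
    (K := K * exp ((μ - ν) * T₀)) (sub_pos.2 hμa) (by positivity)
    (fun s hs => hasDerivAt_exp_mul_of_hasDerivAt (hu s (hTT₀.trans_le hs)))
    (fun s hs => (norm_exp_mul_le (hT₁ s (hT₀T₁.trans hs))).trans <| by
      rw [show -(ν - a) * s = (μ - ν) * s + (a - μ) * s by ring, exp_add, ← mul_assoc]
      gcongr _ * ?_ * _
      exact exp_le_exp.2 (by nlinarith))
  set C := ‖exp (a * T₀) * u T₀‖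
  set K' := K * exp ((μ - ν) * T₀) / (a - μ)
  refine isBigO_exp_of_bound (K := C + K') (T := T₀) fun t ht => ?_
  calc ‖u t‖ = exp (-a * t) * ‖exp (a * t) * u t‖ := by
        rw [← norm_of_nonneg (exp_pos (-a * t)).le, ← norm_mul, exp_neg_mul_mul_exp_mul]
    _ ≤ exp (-a * t) * (C + K' * exp ((a - μ) * t)) := by
        gcongr
        exact hw t ht
    _ = C * exp (-a * t) + K' * (exp (-a * t) * exp ((a - μ) * t)) := by ring
    _ = C * exp (-a * t) + K' * exp (-μ * t) := by
        congr 2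
        rw [← exp_add]
        ring_nf
    _ ≤ (C + K') * exp (-μ * t) := by
        rw [add_mul]
        gcongr
        nlinarith

theorem exists_sub_mul_exp_isBigO (hu : ∀ t > T, HasDerivAt u (φ t - a * u t) t)
    (hφ : ContinuousOn φ (Ioi T)) (hφO : φ =O[atTop] fun t => exp (-ν * t)) :
    ∃ ℓ, (ℓ ≠ 0 → a < ν) ∧
      ∀ μ < ν, (fun t => u t - ℓ * exp (-a * t)) =O[atTop] fun t => exp (-μ * t) := by
  by_cases haν : a < ν
  · obtain ⟨ℓ, hℓ⟩ := exists_sub_mul_exp_isBigO_of_lt hu hφ hφO haν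
    exact ⟨ℓ, fun _ => haν, fun μ hμ => hℓ.trans (isBigO_exp_neg_mul_of_le hμ.le)⟩
  · refine ⟨0, fun h => absurd rfl h, fun μ hμ => ?_⟩
    simpa using isBigO_exp_of_lt_of_lt hu hφO (hμ.trans_le (not_lt.1 haν)) hμ

end Duhamel

lemma le_mul_exp_of_hasDerivWithinAt {h h' : ℝ → ℝ} {a b K : ℝ} (hcont : ContinuousOn h (Icc a b))
    (hderiv : ∀ t ∈ Ico a b, HasDerivWithinAt h (h' t) (Ici t) t)
    (hle : ∀ t ∈ Ico a b, h' t ≤ K * h t) (hab : a ≤ b) : h b ≤ h a * exp (K * (b - a)) := by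
  simpa [gronwallBound_ε0] using le_gronwallBound_of_liminf_deriv_right_le (K := K) (ε := 0)
    hcont (fun x hx r hr => (hderiv x hx).liminf_right_slope_le hr) le_rfl
    (fun x hx => by simpa using hle x hx) b ⟨hab, le_rfl⟩

section Energy

variable {E : Type*} [NormedAddCommGroup E] [InnerProductSpace ℝ E] {L : E →L[ℝ] E} {z g : ℝ → E}

lemma two_inner_sub_le {m ε₀ : ℝ} {v w : E} (hm : m * ‖v‖ ^ 2 ≤ ⟪v, L v⟫_ℝ)
    (hw : ‖w‖ ≤ ε₀ * ‖v‖) : 2 * ⟪v, w - L v⟫_ℝ ≤ -(2 * (m - ε₀)) * ‖v‖ ^ 2 := by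
  rw [inner_sub_right]
  nlinarith [real_inner_le_norm v w, mul_le_mul_of_nonneg_left hw (norm_nonneg v)]

lemma le_two_inner_sub {ε₀ : ℝ} {v w : E} (hw : ‖w‖ ≤ ε₀ * ‖v‖) :
    -(2 * (‖L‖ + ε₀)) * ‖v‖ ^ 2 ≤ 2 * ⟪v, w - L v⟫_ℝ := by
  rw [inner_sub_right]
  nlinarith [neg_le_of_abs_le (abs_real_inner_le_norm v w), real_inner_le_norm v (L v),
    mul_le_mul_of_nonneg_left (L.le_opNorm v) (norm_nonneg v),
    mul_le_mul_of_nonneg_left hw (norm_nonneg v)]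

lemma mul_exp_sq (y k c : ℝ) : (y * exp (-k * c)) ^ 2 = y ^ 2 * exp (-(2 * k) * c) := by
  rw [mul_pow, ← exp_nat_mul]
  ring_nf

theorem norm_le_mul_exp_of_ode (hz : ∀ t ≥ 0, HasDerivWithinAt z (g t - L (z t)) (Ici 0) t)
    {m ε₀ a b : ℝ} (hm : ∀ v, m * ‖v‖ ^ 2 ≤ ⟪v, L v⟫_ℝ) (ha : 0 ≤ a) (hab : a ≤ b)
    (hg : ∀ s ∈ Ico a b, ‖g s‖ ≤ ε₀ * ‖z s‖) :
    ‖z b‖ ≤ ‖z a‖ * exp (-(m - ε₀) * (b - a)) := by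
  have := le_mul_exp_of_hasDerivWithinAt (h := fun s => ‖z s‖ ^ 2)
    (fun s hs => ((hz s (ha.trans hs.1)).continuousWithinAt.mono
      fun r hr => ha.trans hr.1).norm.pow 2)
    (fun s hs => ((hz s (ha.trans hs.1)).mono (Ici_subset_Ici.2 (ha.trans hs.1))).norm_sq)
    (fun s hs => two_inner_sub_le (hm _) (hg s hs)) hab
  exact (pow_le_pow_iff_left₀ (norm_nonneg _) (by positivity) two_ne_zero).1
    (by rwa [mul_exp_sq])

theorem mul_exp_le_norm_of_ode (hz : ∀ t ≥ 0, HasDerivWithinAt z (g t - L (z t)) (Ici 0) t)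
    {ε₀ a b : ℝ} (ha : 0 ≤ a) (hab : a ≤ b) (hg : ∀ s ∈ Ico a b, ‖g s‖ ≤ ε₀ * ‖z s‖) :
    ‖z a‖ * exp (-(‖L‖ + ε₀) * (b - a)) ≤ ‖z b‖ := by
  have := le_mul_exp_of_hasDerivWithinAt (h := fun s => -‖z s‖ ^ 2) (K := -(2 * (‖L‖ + ε₀)))
    (fun s hs => ((hz s (ha.trans hs.1)).continuousWithinAt.mono
      fun r hr => ha.trans hr.1).norm.pow 2 |>.neg)
    (fun s hs => ((hz s (ha.trans hs.1)).mono (Ici_subset_Ici.2 (ha.trans hs.1))).norm_sq.neg)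
    (fun s hs => by
      have := le_two_inner_sub (L := L) (hg s hs)
      linarith) hab
  exact (pow_le_pow_iff_left₀ (by positivity) (norm_nonneg _) two_ne_zero).1
    (by rw [mul_exp_sq]; linarith)

theorem ne_zero_of_ode (hz : ∀ t ≥ 0, HasDerivWithinAt z (g t - L (z t)) (Ici 0) t)
    {η ε₀ : ℝ} (hη : 0 < η) (hsmall : ∀ t ≥ 0, ‖z t‖ ≤ η → ‖g t‖ ≤ ε₀ * ‖z t‖) (hz0 : z 0 ≠ 0) :
    ∀ t ≥ 0, z t ≠ 0 := by
  intro t₀ ht₀ hzt₀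
  have hcont : ContinuousOn z (Ici 0) := fun t ht => (hz t ht).continuousWithinAt
  set Z := Ici 0 ∩ z ⁻¹' {0}
  have hbdd : BddBelow Z := ⟨0, fun t ht => ht.1⟩
  have ht₁ : sInf Z ∈ Z := (hcont.preimage_isClosed_of_isClosed isClosed_Ici
    isClosed_singleton).csInf_mem ⟨t₀, ht₀, hzt₀⟩ hbdd
  set t₁ := sInf Z
  have ht₁pos : 0 < t₁ := ht₁.1.lt_of_ne fun h => hz0 (h ▸ ht₁.2)
  have hnear : ∀ᶠ s in 𝓝[≤] t₁, ‖z s‖ ≤ η := by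
    refine nhdsWithin_le_nhds ((hcont.continuousAt (Ici_mem_nhds ht₁pos)).norm.eventually
      (eventually_le_nhds ?_))
    simpa [show z t₁ = 0 from ht₁.2] using hη
  obtain ⟨l, hl, hlt₁⟩ := mem_nhdsLE_iff_exists_Ioc_subset.1 hnear
  -- `z` is small on `[a, t₁]`, so the lower energy bound keeps `z t₁ ≠ 0`
  set a := max ((l + t₁) / 2) 0
  have hat₁ : a < t₁ := max_lt (by linarith [mem_Iio.1 hl]) ht₁pos
  have hza : z a ≠ 0 := fun h => (csInf_le hbdd ⟨mem_Ici.2 (le_max_right _ _), h⟩).not_gt hat₁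
  have := mul_exp_le_norm_of_ode hz (le_max_right _ _) hat₁.le fun s hs =>
    hsmall s ((le_max_right _ _).trans hs.1)
      (hlt₁ ⟨by linarith [le_max_left ((l + t₁) / 2) 0, hs.1, mem_Iio.1 hl], hs.2.le⟩)
  rw [show z t₁ = 0 from ht₁.2, norm_zero] at this
  exact this.not_gt (mul_pos (norm_pos_iff.2 hza) (exp_pos _))

theorem isBigO_exp_of_ode (hz : ∀ t ≥ 0, HasDerivWithinAt z (g t - L (z t)) (Ici 0) t)
    {m ε₀ : ℝ} (hm : ∀ v, m * ‖v‖ ^ 2 ≤ ⟪v, L v⟫_ℝ)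
    (hsmall : ∀ᶠ t in atTop, ‖g t‖ ≤ ε₀ * ‖z t‖) :
    z =O[atTop] fun t => exp (-(m - ε₀) * t) := by
  obtain ⟨T₀, hT₀⟩ := eventually_atTop.1 (hsmall.and (eventually_ge_atTop 0))
  refine isBigO_exp_of_bound (K := ‖z T₀‖ * exp ((m - ε₀) * T₀)) (T := T₀) fun t ht => ?_
  refine (norm_le_mul_exp_of_ode hz hm (hT₀ T₀ le_rfl).2 ht
    fun s hs => (hT₀ s hs.1).1).trans_eq ?_
  rw [mul_assoc, ← exp_add]
  ring_nf

theorem le_of_isBigO_exp_of_ode (hz : ∀ t ≥ 0, HasDerivWithinAt z (g t - L (z t)) (Ici 0) t)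
    {ε₀ : ℝ} (hsmall : ∀ᶠ t in atTop, ‖g t‖ ≤ ε₀ * ‖z t‖) (hnz : ∀ t ≥ 0, z t ≠ 0) {μ : ℝ}
    (hμ : z =O[atTop] fun t => exp (-μ * t)) : μ ≤ ‖L‖ + ε₀ := by
  by_contra! hlt
  obtain ⟨T₀, hT₀⟩ := eventually_atTop.1 (hsmall.and (eventually_ge_atTop 0))
  set k := ‖L‖ + ε₀
  have hzT₀ : 0 < ‖z T₀‖ := norm_pos_iff.2 (hnz T₀ (hT₀ T₀ le_rfl).2)
  have hslow : (fun t => exp (-k * t)) =O[atTop] z := by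
    refine IsBigO.of_bound (exp (-k * T₀) / ‖z T₀‖) ((eventually_ge_atTop T₀).mono fun t ht => ?_)
    have := mul_exp_le_norm_of_ode hz (hT₀ T₀ le_rfl).2 ht fun s hs => (hT₀ s hs.1).1
    rw [norm_of_nonneg (exp_pos _).le, div_mul_eq_mul_div, le_div_iff₀ hzT₀]
    calc exp (-k * t) * ‖z T₀‖ = exp (-k * T₀) * (‖z T₀‖ * exp (-k * (t - T₀))) := by
          rw [mul_left_comm, ← exp_add]; ring_nf
      _ ≤ exp (-k * T₀) * ‖z t‖ := by gcongr
  have hfast : (fun t => exp (-μ * t)) =o[atTop] fun t => exp (-k * t) :=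
    isLittleO_exp_comp_exp_comp.2 <|
      (tendsto_id.const_mul_atTop (sub_pos.2 hlt)).congr fun t => by simp only [id]; ring
  exact isLittleO_irrefl (.of_forall fun t => (exp_pos _).ne')
    ((hslow.trans hμ).trans_isLittleO hfast)

end Energy

lemma exists_pos_forall_mul_rpow_le (c : ℝ) {α ε₀ : ℝ} (hα : 0 < α) (hε₀ : 0 < ε₀) :
    ∃ η > 0, ∀ r, 0 ≤ r → r ≤ η → c * r ^ (1 + α) ≤ ε₀ * r := by
  have hlim : Tendsto (fun r : ℝ => c * r ^ α) (𝓝 0) (𝓝 0) := by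
    simpa [zero_rpow hα.ne'] using
      ((continuousAt_rpow_const 0 α (Or.inr hα.le)).tendsto).const_mul c
  obtain ⟨η, hη, hball⟩ := Metric.eventually_nhds_iff.1 (hlim.eventually (eventually_lt_nhds hε₀))
  refine ⟨η / 2, half_pos hη, fun r hr hrη => ?_⟩
  have := hball (show dist r 0 < η by rw [dist_zero_right, norm_of_nonneg hr]; linarith)
  rw [rpow_one_add' hr (by linarith), mul_left_comm]
  nlinarith

lemma isBigO_exp_mul_of_norm_le_rpow {E F : Type*} [NormedAddCommGroup E] [NormedAddCommGroup F]
    {f : ℝ → E} {u : ℝ → F} {c p μ : ℝ} (hp : 0 ≤ p)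
    (hfu : ∀ᶠ t in atTop, ‖f t‖ ≤ c * ‖u t‖ ^ p) (hu : u =O[atTop] fun t => exp (-μ * t)) :
    f =O[atTop] fun t => exp (-(p * μ) * t) := by
  have hf : f =O[atTop] fun t => ‖u t‖ ^ p :=
    IsBigO.of_bound c (hfu.mono fun t ht => by rwa [norm_of_nonneg (by positivity)])
  refine hf.trans ((hu.norm_left.rpow hp (.of_forall fun t => (exp_pos _).le)).congr_right
    fun t => ?_)
  rw [← exp_mul]
  ring_nf

lemma of_rate_bootstrap {R : ℝ → Prop} {Q : Prop} {μ₀ q M : ℝ} (hμ₀ : 0 < μ₀) (hq : 1 < q)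
    (h₀ : R μ₀) (hbdd : ∀ μ, R μ → μ ≤ M) (hstep : ∀ μ, 0 < μ → R μ → Q ∨ R (q * μ)) : Q := by
  by_contra hQ
  have hR (n : ℕ) : R (q ^ n * μ₀) := by
    induction n with
    | zero => simpa using h₀
    | succ n ih =>
      rw [pow_succ, mul_comm _ q, mul_assoc]
      exact (hstep _ (by positivity) ih).resolve_left hQ
  obtain ⟨n, hn⟩ := pow_unbounded_of_one_lt (M / μ₀) hq
  rw [div_lt_iff₀ hμ₀] at hn
  linarith [hbdd _ (hR n)]

section Eigenmode

variable {E F : Type*} [NormedAddCommGroup E] [NormedSpace ℝ E] [NormedAddCommGroup F]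
  [NormedSpace ℝ F]

def HasEigenmodeAsymptotics (L : E →L[ℝ] E) (z : ℝ → E) : Prop :=
  ∃ (lam : ℝ) (ξ : E) (δ : ℝ), ξ ≠ 0 ∧ L ξ = lam • ξ ∧ 0 < δ ∧
    (fun t => z t - exp (-lam * t) • ξ) =O[atTop] fun t => exp (-(lam + δ) * t)

lemma HasEigenmodeAsymptotics.comp {L : E →L[ℝ] E} {L' : F →L[ℝ] F} {z : ℝ → E}
    (h : HasEigenmodeAsymptotics L z) (P : E →L[ℝ] F) (hP : Function.Injective P)
    (hPL : ∀ v, L' (P v) = P (L v)) : HasEigenmodeAsymptotics L' fun t => P (z t) := by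
  obtain ⟨lam, ξ, δ, hξ, hLξ, hδ, hO⟩ := h
  refine ⟨lam, P ξ, δ, (map_ne_zero_iff P hP).2 hξ, by rw [hPL, hLξ, map_smul], hδ, ?_⟩
  simpa only [map_sub, map_smul] using (P.isBigO_comp _ atTop).trans hO

end Eigenmode

section Diagonal

variable {ι : Type*} [Fintype ι]

lemma EuclideanSpace.isBigO_of_forall_coord {α : Type*} {l : Filter α} {f : α → EuclideanSpace ℝ ι}
    {g : α → ℝ} (h : ∀ i, (fun x => f x i) =O[l] g) : f =O[l] g :=
  (ContinuousLinearEquiv.isBigO_comp_rev (EuclideanSpace.equiv ι ℝ) f l).trans (isBigO_pi.2 h)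

variable [DecidableEq ι]

lemma toEuclideanCLM_diagonal_apply (d : ι → ℝ) (v : EuclideanSpace ℝ ι) (i : ι) :
    toEuclideanCLM (𝕜 := ℝ) (diagonal d) v i = d i * v i := by
  cases v
  simp [toEuclideanCLM_toLp, mulVec_diagonal]

lemma mul_norm_sq_le_inner_diagonal_s9 {d : ι → ℝ} {m : ℝ} (hm : ∀ i, m ≤ d i)
    (v : EuclideanSpace ℝ ι) : m * ‖v‖ ^ 2 ≤ ⟪v, toEuclideanCLM (𝕜 := ℝ) (diagonal d) v⟫_ℝ := by
  rw [EuclideanSpace.norm_sq_eq, PiLp.inner_apply, Finset.mul_sum]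
  refine Finset.sum_le_sum fun i _ => ?_
  simp only [toEuclideanCLM_diagonal_apply, Real.norm_eq_abs, sq_abs, RCLike.inner_apply,
    conj_trivial]
  nlinarith [sq_nonneg (v i), hm i]

lemma hasDerivAt_coord_of_ode {d : ι → ℝ} {z g : ℝ → EuclideanSpace ℝ ι} {t : ℝ}
    (hz : HasDerivAt z (g t - toEuclideanCLM (𝕜 := ℝ) (diagonal d) (z t)) t) (i : ι) :
    HasDerivAt (fun s => z s i) (g t i - d i * z t i) t := by
  refine ((EuclideanSpace.proj (𝕜 := ℝ) i).hasFDerivAt.comp_hasDerivAt t hz).congr_deriv ?_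
  simp [toEuclideanCLM_diagonal_apply]

theorem hasEigenmodeAsymptotics_or_isBigO_of_ode {d : ι → ℝ} {z g : ℝ → EuclideanSpace ℝ ι}
    {ν : ℝ} (hz : ∀ t > 0, HasDerivAt z (g t - toEuclideanCLM (𝕜 := ℝ) (diagonal d) (z t)) t)
    (hg : ContinuousOn g (Ioi 0)) (hgO : g =O[atTop] fun t => exp (-ν * t)) :
    HasEigenmodeAsymptotics (toEuclideanCLM (𝕜 := ℝ) (diagonal d)) z ∨
      ∀ μ < ν, z =O[atTop] fun t => exp (-μ * t) := by
  have hcoord (i : ι) : ∃ ℓ, (ℓ ≠ 0 → d i < ν) ∧ ∀ μ < ν,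
      (fun t => z t i - ℓ * exp (-d i * t)) =O[atTop] fun t => exp (-μ * t) :=
    exists_sub_mul_exp_isBigO (fun t ht => hasDerivAt_coord_of_ode (hz t ht) i)
      ((EuclideanSpace.proj i).continuous.comp_continuousOn hg)
      (((EuclideanSpace.proj (𝕜 := ℝ) i).isBigO_comp g atTop).trans hgO)
  choose ℓ hℓν hℓ using hcoord
  by_cases hℓ0 : ∀ i, ℓ i = 0
  · exact .inr fun μ hμ => EuclideanSpace.isBigO_of_forall_coord fun i => by
      simpa [hℓ0] using hℓ i μ hμ
  push Not at hℓ0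
  obtain ⟨i₀, hi₀, hmin⟩ := Finset.exists_min_image {i | ℓ i ≠ 0} d
    (by simpa [Finset.filter_nonempty_iff] using hℓ0)
  rw [Finset.mem_filter] at hi₀
  -- the remainder decays at any rate `μ` below `ν` and below every eigenvalue exceeding `d i₀`
  obtain ⟨μ, hlamμ, hμν, hμd⟩ : ∃ μ, d i₀ < μ ∧ μ < ν ∧ ∀ i, d i₀ < d i → μ < d i :=
    (Eventually.and self_mem_nhdsWithin (nhdsWithin_le_nhds ((eventually_lt_nhds (hℓν i₀ hi₀.2)).and
      (eventually_all.2 fun i => eventually_imp_distrib_left.2 eventually_lt_nhds)))).exists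
      (f := 𝓝[>] d i₀)
  set ξ : EuclideanSpace ℝ ι := WithLp.toLp 2 fun i => if d i = d i₀ then ℓ i else 0
  refine .inl ⟨d i₀, ξ, μ - d i₀, fun h => hi₀.2 ?_, ?_, sub_pos.2 hlamμ, ?_⟩
  · simpa [ξ] using congrArg (· i₀) h
  · ext i
    by_cases hi : d i = d i₀ <;> simp [ξ, toEuclideanCLM_toLp, mulVec_diagonal, hi]
  rw [add_sub_cancel]
  refine EuclideanSpace.isBigO_of_forall_coord fun i => ?_
  by_cases hi : d i = d i₀
  · exact (hℓ i μ hμν).congr_left fun t => by simp [ξ, hi, mul_comm]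
  have hrest : (fun t => ℓ i * exp (-d i * t)) =O[atTop] fun t => exp (-μ * t) := by
    by_cases h0 : ℓ i = 0
    · simpa [h0] using isBigO_zero _ _
    have hlt : d i₀ < d i := (hmin i (by simp [h0])).lt_of_ne' hi
    exact (isBigO_exp_neg_mul_of_le (hμd i hlt).le).const_mul_left _
  exact ((hℓ i μ hμν).add hrest).congr_left fun t => by simp [ξ, hi]

theorem hasEigenmodeAsymptotics_of_ode {d : ι → ℝ} (hd : ∀ i, 0 < d i)
    {z g : ℝ → EuclideanSpace ℝ ι}
    (hz : ∀ t ≥ 0, HasDerivWithinAt z (g t - toEuclideanCLM (𝕜 := ℝ) (diagonal d) (z t)) (Ici 0) t)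
    (hg : ContinuousOn g (Ici 0)) {c ε α : ℝ} (hε : 0 < ε) (hα : 0 < α)
    (hgz : ∀ t ≥ 0, ‖z t‖ ≤ ε → ‖g t‖ ≤ c * ‖z t‖ ^ (1 + α))
    (hz0 : z 0 ≠ 0) (hdecay : Tendsto z atTop (𝓝 0)) :
    HasEigenmodeAsymptotics (toEuclideanCLM (𝕜 := ℝ) (diagonal d)) z := by
  obtain ⟨m, hm, hmd⟩ : ∃ m, 0 < m ∧ ∀ i, m < d i :=
    (Eventually.and self_mem_nhdsWithin (nhdsWithin_le_nhds
      (eventually_all.2 fun i => eventually_lt_nhds (hd i)))).exists (f := 𝓝[>] 0)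
  obtain ⟨η, hη, hηsmall⟩ := exists_pos_forall_mul_rpow_le c hα (half_pos hm)
  have hsmall (t : ℝ) (ht : 0 ≤ t) (hzt : ‖z t‖ ≤ min η ε) : ‖g t‖ ≤ m / 2 * ‖z t‖ :=
    (hgz t ht (hzt.trans (min_le_right _ _))).trans
      (hηsmall _ (norm_nonneg _) (hzt.trans (min_le_left _ _)))
  have hlate {r : ℝ} (hr : 0 < r) : ∀ᶠ t in atTop, 0 ≤ t ∧ ‖z t‖ ≤ r :=
    (eventually_ge_atTop 0).and (hdecay.norm.eventually (eventually_le_nhds (by simpa using hr)))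
  have hsmall' : ∀ᶠ t in atTop, ‖g t‖ ≤ m / 2 * ‖z t‖ :=
    (hlate (lt_min hη hε)).mono fun t ht => hsmall t ht.1 ht.2
  refine of_rate_bootstrap (R := fun μ => z =O[atTop] fun t => exp (-μ * t)) (half_pos hm)
    (by linarith : 1 < 1 + α / 2) ?_
    (fun μ => le_of_isBigO_exp_of_ode hz hsmall' (ne_zero_of_ode hz (lt_min hη hε) hsmall hz0))
    fun μ hμ hR => ?_
  · simpa [sub_half] using
      isBigO_exp_of_ode hz (mul_norm_sq_le_inner_diagonal_s9 fun i => (hmd i).le) hsmall'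
  refine (hasEigenmodeAsymptotics_or_isBigO_of_ode
    (fun t ht => (hz t ht.le).hasDerivAt (Ici_mem_nhds ht)) (hg.mono Ioi_subset_Ici_self)
    (isBigO_exp_mul_of_norm_le_rpow (by positivity)
      ((hlate hε).mono fun t ht => hgz t ht.1 ht.2) hR)).imp_right fun h => h _ ?_
  nlinarith

end Diagonal

lemma norm_map_le_rpow_of_leftInverse {E F : Type*} [NormedAddCommGroup E] [NormedSpace ℝ E]
    [NormedAddCommGroup F] [NormedSpace ℝ F] {P : E →L[ℝ] F} {Q : F →L[ℝ] E}
    (hQP : ∀ v, Q (P v) = v) {c ε p : ℝ} (hc : 0 ≤ c) (hp : 0 ≤ p) {v w : E}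
    (hw : ‖v‖ ≤ ε → ‖w‖ ≤ c * ‖v‖ ^ p) (hv : ‖P v‖ ≤ ε / (‖Q‖ + 1)) :
    ‖P w‖ ≤ ‖P‖ * c * (‖Q‖ + 1) ^ p * ‖P v‖ ^ p := by
  have hvQ : ‖v‖ ≤ (‖Q‖ + 1) * ‖P v‖ :=
    calc ‖v‖ = ‖Q (P v)‖ := by rw [hQP]
      _ ≤ ‖Q‖ * ‖P v‖ := Q.le_opNorm _
      _ ≤ (‖Q‖ + 1) * ‖P v‖ := by gcongr; linarith
  calc ‖P w‖ ≤ ‖P‖ * (c * ‖v‖ ^ p) := (P.le_opNorm w).trans (by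
        gcongr
        exact hw (hvQ.trans (by rwa [le_div_iff₀' (by positivity)] at hv)))
    _ ≤ ‖P‖ * (c * ((‖Q‖ + 1) * ‖P v‖) ^ p) := by gcongr
    _ = ‖P‖ * c * (‖Q‖ + 1) ^ p * ‖P v‖ ^ p := by
        rw [mul_rpow (by positivity) (norm_nonneg _)]
        ring

lemma toEuclideanCLM_apply {n : Type*} [Fintype n] [DecidableEq n] (M : Matrix n n ℝ)
    (v : EuclideanSpace ℝ n) : toEuclideanCLM (𝕜 := ℝ) M v = toEuclideanLin M v := rfl

lemma toEuclideanCLM_apply_apply {n : Type*} [Fintype n] [DecidableEq n] (M N : Matrix n n ℝ)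
    (v : EuclideanSpace ℝ n) :
    toEuclideanCLM (𝕜 := ℝ) M (toEuclideanCLM (𝕜 := ℝ) N v) =
      toEuclideanCLM (𝕜 := ℝ) (M * N) v := by
  rw [map_mul]
  rfl

theorem stmt_9_general {d : ℕ} (A S : Matrix (Fin d) (Fin d) ℝ) (hS : IsUnit S.det)
    (d₀ : Fin d → ℝ) (hpos : ∀ i, 0 < d₀ i)
    (hA : A = S⁻¹ * Matrix.diagonal d₀ * S)
    (F : ℝ → EuclideanSpace ℝ (Fin d) → EuclideanSpace ℝ (Fin d))
    (hFcont : ContinuousOn (fun p : ℝ × EuclideanSpace ℝ (Fin d) => F p.1 p.2)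
      (Ici (0 : ℝ) ×ˢ univ))
    (cstar εstar α : ℝ) (hc : 0 < cstar) (hε : 0 < εstar) (hα : 0 < α)
    (hFbound : ∀ t ≥ (0 : ℝ), ∀ x : EuclideanSpace ℝ (Fin d), ‖x‖ ≤ εstar →
      ‖F t x‖ ≤ cstar * ‖x‖ ^ (1 + α))
    (y : ℝ → EuclideanSpace ℝ (Fin d))
    (hy : ∀ t ∈ Ici (0 : ℝ),
      HasDerivWithinAt y (F t (y t) - Matrix.toEuclideanLin A (y t)) (Ici (0 : ℝ)) t)
    (hy0 : y 0 ≠ 0)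
    (hdecay : Filter.Tendsto y Filter.atTop (nhds 0)) :
    ∃ (lam : ℝ) (ξ : EuclideanSpace ℝ (Fin d)) (δ C T : ℝ), ξ ≠ 0 ∧
      Matrix.toEuclideanLin A ξ = lam • ξ ∧ 0 < δ ∧ 0 < C ∧
      ∀ t ≥ T, ‖y t - Real.exp (-lam * t) • ξ‖ ≤ C * Real.exp (-(lam + δ) * t) := by
  have hSA : S * A = diagonal d₀ * S := by
    rw [hA, ← Matrix.mul_assoc, ← Matrix.mul_assoc, mul_nonsing_inv S hS, Matrix.one_mul]
  have hAS : A * S⁻¹ = S⁻¹ * diagonal d₀ := by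
    rw [hA, Matrix.mul_assoc, mul_nonsing_inv S hS, Matrix.mul_one]
  set P := toEuclideanCLM (𝕜 := ℝ) S
  set Q := toEuclideanCLM (𝕜 := ℝ) S⁻¹
  have hQP (v) : Q (P v) = v := by
    rw [toEuclideanCLM_apply_apply, nonsing_inv_mul S hS, map_one]; rfl
  have hPQ (v) : P (Q v) = v := by
    rw [toEuclideanCLM_apply_apply, mul_nonsing_inv S hS, map_one]; rfl
  have hz (t : ℝ) (ht : 0 ≤ t) : HasDerivWithinAt (fun s => P (y s))
      (P (F t (y t)) - toEuclideanCLM (𝕜 := ℝ) (diagonal d₀) (P (y t))) (Ici 0) t := by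
    refine (P.hasFDerivAt.comp_hasDerivWithinAt t (hy t ht)).congr_deriv ?_
    rw [map_sub, ← toEuclideanCLM_apply, toEuclideanCLM_apply_apply, toEuclideanCLM_apply_apply,
      hSA]
  have hg : ContinuousOn (fun t => P (F t (y t))) (Ici 0) :=
    P.continuous.comp_continuousOn (hFcont.comp (continuousOn_id.prodMk
      fun t ht => (hy t ht).continuousWithinAt) fun t ht => ⟨ht, mem_univ _⟩)
  have hdiag := hasEigenmodeAsymptotics_of_ode hpos hz hg
    (by positivity : 0 < εstar / (‖Q‖ + 1)) hα
    (fun t ht => norm_map_le_rpow_of_leftInverse hQP hc.le (by positivity) (hFbound t ht (y t)))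
    ((map_ne_zero_iff P (Function.LeftInverse.injective hQP)).2 hy0)
    ((P.continuous.tendsto' 0 0 (map_zero P)).comp hdecay)
  obtain ⟨lam, ξ, δ, hξ, hAξ, hδ, hO⟩ :=
    hdiag.comp Q (Function.LeftInverse.injective hPQ) fun v => by
      rw [toEuclideanCLM_apply_apply, toEuclideanCLM_apply_apply, hAS]
  obtain ⟨C, hC, T, hT⟩ := hO.exists_bound_exp
  refine ⟨lam, ξ, δ, C, T, hξ, by rwa [← toEuclideanCLM_apply], hδ, hC, fun t ht => ?_⟩
  simpa only [hQP] using hT t ht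

/-- First asymptotic approximation: a non-trivial decaying solution of
`y' + Ay = F(t,y)` satisfies `|y(t) - e^{-λ* t} ξ*| = O(e^{-(λ*+δ)t})` for some
eigenvalue `λ*` of `A` with eigenvector `ξ* ≠ 0`. -/
theorem stmt_9 {d : ℕ} (A S : Matrix (Fin d) (Fin d) ℝ) (hS : IsUnit S.det)
    (d₀ : Fin d → ℝ) (hpos : ∀ i, 0 < d₀ i)
    (hA : A = S⁻¹ * Matrix.diagonal d₀ * S)
    (F : ℝ → EuclideanSpace ℝ (Fin d) → EuclideanSpace ℝ (Fin d))
    (hFcont : ContinuousOn (fun p : ℝ × EuclideanSpace ℝ (Fin d) => F p.1 p.2)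
      (Ici (0 : ℝ) ×ˢ univ))
    (hFlip : ∀ x₀ : EuclideanSpace ℝ (Fin d), ∃ (r : ℝ) (K : NNReal), 0 < r ∧
      ∀ t ≥ (0 : ℝ), LipschitzOnWith K (F t) (Metric.ball x₀ r))
    (cstar εstar α : ℝ) (hc : 0 < cstar) (hε : 0 < εstar) (hα : 0 < α)
    (hFbound : ∀ t ≥ (0 : ℝ), ∀ x : EuclideanSpace ℝ (Fin d), ‖x‖ ≤ εstar →
      ‖F t x‖ ≤ cstar * ‖x‖ ^ (1 + α))
    (y : ℝ → EuclideanSpace ℝ (Fin d))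
    (hy : ∀ t ∈ Ici (0 : ℝ),
      HasDerivWithinAt y (F t (y t) - Matrix.toEuclideanLin A (y t)) (Ici (0 : ℝ)) t)
    (hy0 : y 0 ≠ 0)
    (hdecay : Filter.Tendsto y Filter.atTop (nhds 0)) :
    ∃ (lam : ℝ) (ξ : EuclideanSpace ℝ (Fin d)) (δ C T : ℝ), ξ ≠ 0 ∧
      Matrix.toEuclideanLin A ξ = lam • ξ ∧ 0 < δ ∧ 0 < C ∧
      ∀ t ≥ T, ‖y t - Real.exp (-lam * t) • ξ‖ ≤ C * Real.exp (-(lam + δ) * t) :=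
  stmt_9_general A S hS d₀ hpos hA F hFcont cstar εstar α hc hε hα hFbound y hy hy0 hdecay
end

section
/- Let A be a diagonalizable d×d real matrix with positive eigenvalues, λ > 0, and g : [T,∞) → ℝᵈ continuous with |g(t)| = O(e^{-αt}) for some α > 0. If y ∈ C¹([T,∞), ℝᵈ) solves y' = −(A − λI)y + g(t) and, in case λ exceeds the smallest eigenvalue λ₁ of A, additionally e^{(λ̄−λ)t}|y(t)| → 0 where λ̄ is the largest eigenvalue of A below λ, then there exist a vector ξ ∈ ℝᵈ with (A − λI)ξ = 0 and ε > 0 such that |y(t) − ξ| = O(e^{-εt}). -/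
/-!
Conjugating by `S` decouples the system into scalar equations `zᵢ' = -(dᵢ - λ) zᵢ + hᵢ` with
`hᵢ = O(e^{-αt})`. For `wᵢ = e^{(dᵢ - λ)t} zᵢ` we have `wᵢ' = e^{(dᵢ - λ)t} hᵢ`, and an exponential
bound on a derivative integrates, by the mean value inequality, to the same bound on the function
(for growing rates) or on its distance to its limit (for decaying rates). If `dᵢ = λ` this gives
`zᵢ → cᵢ` exponentially fast; if `dᵢ > λ` the factor `e^{-(dᵢ - λ)t}` forces `zᵢ → 0`; if
`dᵢ < λ`, `wᵢ` converges, and the side condition at the largest eigenvalue below `λ` makes the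
limit `0`. Then `ξ = S⁻¹ c`.
-/

open Matrix Set
open Real Filter Asymptotics Topology

theorem tendsto_exp_neg_mul_atTop {γ : ℝ} (hγ : 0 < γ) :
    Tendsto (fun t => exp (-γ * t)) atTop (𝓝 0) :=
  tendsto_exp_atBot.comp (tendsto_id.const_mul_atTop_of_neg (neg_lt_zero.2 hγ))

theorem isBigO_exp_iff {E : Type*} [NormedAddCommGroup E] {f : ℝ → E} {κ : ℝ} :
    (f =O[atTop] fun t => exp (κ * t)) ↔ ∃ C T, ∀ t ≥ T, ‖f t‖ ≤ C * exp (κ * t) := by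
  simp only [isBigO_iff, eventually_atTop, norm_eq_abs, abs_exp]

theorem isBigO_exp_mul_of_le {a b : ℝ} (hab : a ≤ b) :
    (fun t => exp (a * t)) =O[atTop] fun t => exp (b * t) := by
  refine isBigO_exp_comp_exp_comp.2 (isBoundedUnder_of_eventually_le (a := 0) ?_)
  filter_upwards [eventually_ge_atTop 0] with t ht
  simp only [Pi.sub_apply]
  nlinarith

theorem Asymptotics.IsBigO.exp_mul {l : Filter ℝ} {f : ℝ → ℝ} {a : ℝ} (b : ℝ)
    (hf : f =O[l] fun t => exp (a * t)) :
    (fun t => exp (b * t) * f t) =O[l] fun t => exp ((b + a) * t) := by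
  simpa only [add_mul, exp_add] using (isBigO_refl (fun t => exp (b * t)) l).mul hf

section ExponentialBounds

variable {E : Type*} [NormedAddCommGroup E] [NormedSpace ℝ E] {f f' : ℝ → E}

theorem norm_sub_le_of_norm_deriv_le_exp {C κ s t : ℝ} (hκ : κ ≠ 0)
    (hf : ∀ x ≥ s, HasDerivAt f (f' x) x) (hf' : ∀ x ≥ s, ‖f' x‖ ≤ C * exp (κ * x))
    (hst : s ≤ t) : ‖f t - f s‖ ≤ C / κ * (exp (κ * t) - exp (κ * s)) := by
  have hB (x : ℝ) :
      HasDerivAt (fun x => C / κ * (exp (κ * x) - exp (κ * s))) (C * exp (κ * x)) x := by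
    refine ((((hasDerivAt_id x).const_mul κ).exp.sub_const _).const_mul (C / κ)).congr_deriv ?_
    field_simp
    simp
  refine image_norm_le_of_norm_deriv_right_le_deriv_boundary (f := fun x => f x - f s)
    (fun x hx => ((hf x hx.1).sub_const _).continuousAt.continuousWithinAt)
    (fun x hx => ((hf x hx.1).sub_const _).hasDerivWithinAt) (by simp) hB
    (fun x hx => hf' x hx.1) ⟨hst, le_rfl⟩

theorem exists_forall_ge_hasDerivAt_and_norm_le_exp {κ : ℝ}
    (hf : ∀ᶠ t in atTop, HasDerivAt f (f' t) t) (hf' : f' =O[atTop] fun t => exp (κ * t)) :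
    ∃ C > 0, ∃ T, ∀ x ≥ T, HasDerivAt f (f' x) x ∧ ‖f' x‖ ≤ C * exp (κ * x) := by
  obtain ⟨C, hC, hC'⟩ := hf'.exists_pos
  obtain ⟨T, hT⟩ := eventually_atTop.1 (hf.and hC'.bound)
  exact ⟨C, hC, T, fun x hx => ⟨(hT x hx).1, by simpa using (hT x hx).2⟩⟩

theorem exists_sub_isBigO_of_deriv_isBigO_exp_neg [CompleteSpace E] {γ : ℝ} (hγ : 0 < γ)
    (hf : ∀ᶠ t in atTop, HasDerivAt f (f' t) t)
    (hf' : f' =O[atTop] fun t => exp (-γ * t)) :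
    ∃ L, (fun t => f t - L) =O[atTop] fun t => exp (-γ * t) := by
  obtain ⟨C, hC, T, hT⟩ := exists_forall_ge_hasDerivAt_and_norm_le_exp hf hf'
  have hdist : ∀ s ≥ T, ∀ t ≥ s, ‖f t - f s‖ ≤ C / γ * exp (-γ * s) := fun s hs t hst => by
    have := norm_sub_le_of_norm_deriv_le_exp (neg_ne_zero.2 hγ.ne')
      (fun x hx => (hT x (hs.trans hx)).1) (fun x hx => (hT x (hs.trans hx)).2) hst
    rw [div_neg, neg_mul_comm, neg_sub] at this
    exact this.trans (mul_le_mul_of_nonneg_left (by linarith [exp_pos (-γ * t)]) (by positivity))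
  have hcauchy : CauchySeq f := Metric.cauchySeq_iff'.2 fun δ hδ => by
    obtain ⟨N, hNT, hN⟩ := ((eventually_ge_atTop T).and
      (((tendsto_exp_neg_mul_atTop hγ).const_mul (C / γ)).eventually
        (gt_mem_nhds (by rwa [mul_zero])))).exists
    exact ⟨N, fun t ht => (dist_eq_norm _ _).trans_lt ((hdist N hNT t ht).trans_lt hN)⟩
  obtain ⟨L, hL⟩ := cauchySeq_tendsto_of_complete hcauchy
  refine ⟨L, isBigO_exp_iff.2 ⟨C / γ, T, fun s hs => ?_⟩⟩
  rw [← norm_neg, neg_sub]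
  exact le_of_tendsto (hL.sub_const (f s)).norm
    ((eventually_ge_atTop s).mono fun t ht => hdist s hs t ht)

theorem isBigO_exp_of_deriv_isBigO_exp {κ : ℝ} (hκ : 0 < κ)
    (hf : ∀ᶠ t in atTop, HasDerivAt f (f' t) t) (hf' : f' =O[atTop] fun t => exp (κ * t)) :
    f =O[atTop] fun t => exp (κ * t) := by
  obtain ⟨C, hC, T, hT⟩ := exists_forall_ge_hasDerivAt_and_norm_le_exp hf hf'
  refine isBigO_exp_iff.2 ⟨‖f T‖ + C / κ, max T 0, fun t ht => ?_⟩
  have hsub := norm_sub_le_of_norm_deriv_le_exp hκ.ne' (fun x hx => (hT x hx).1)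
    (fun x hx => (hT x hx).2) (le_of_max_le_left ht)
  have hone : 1 ≤ exp (κ * t) := one_le_exp (by nlinarith [le_of_max_le_right ht])
  calc ‖f t‖ ≤ ‖f T‖ + ‖f t - f T‖ := norm_le_insert' _ _
    _ ≤ ‖f T‖ * exp (κ * t) + C / κ * exp (κ * t) := by
        gcongr
        · exact le_mul_of_one_le_right (norm_nonneg _) hone
        · exact hsub.trans
            (mul_le_mul_of_nonneg_left (by linarith [exp_pos (κ * T)]) (by positivity))
    _ = _ := by ring

end ExponentialBounds

section LinearODE

variable {α β : ℝ} {u h : ℝ → ℝ}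

theorem hasDerivAt_exp_mul_of_linear_ode {t : ℝ} (hu : HasDerivAt u (-β * u t + h t) t) :
    HasDerivAt (fun s => exp (β * s) * u s) (exp (β * t) * h t) t := by
  refine (((hasDerivAt_id t).const_mul β).exp.mul hu).congr_deriv ?_
  simp only [id]
  ring

theorem isBigO_exp_of_exp_mul_isBigO {κ : ℝ}
    (hw : (fun t => exp (β * t) * u t) =O[atTop] fun t => exp (κ * t)) :
    u =O[atTop] fun t => exp ((κ - β) * t) := by
  convert hw.exp_mul (-β) using 1
  · ext t
    rw [← mul_assoc, ← exp_add, neg_mul, neg_add_cancel, exp_zero, one_mul]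
  · ext t
    ring_nf

variable (hα : 0 < α) (hu : ∀ᶠ t in atTop, HasDerivAt u (-β * u t + h t) t)
  (hh : h =O[atTop] fun t => exp (-α * t))
include hα hu hh

theorem isBigO_exp_of_linear_ode_of_pos (hβ : 0 < β) :
    ∃ ε > 0, u =O[atTop] fun t => exp (-ε * t) := by
  obtain ⟨ε, hε, hεα, hεβ⟩ : ∃ ε > 0, ε ≤ α ∧ ε < β :=
    ⟨min α β / 2, by positivity, by linarith [min_le_left α β, lt_min hα hβ],
      by linarith [min_le_right α β, lt_min hα hβ]⟩
  have hw : (fun t => exp (β * t) * u t) =O[atTop] fun t => exp ((β - ε) * t) :=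
    isBigO_exp_of_deriv_isBigO_exp (by linarith)
      (hu.mono fun t ht => hasDerivAt_exp_mul_of_linear_ode ht)
      ((hh.exp_mul β).trans (isBigO_exp_mul_of_le (by linarith)))
  exact ⟨ε, hε, by simpa using isBigO_exp_of_exp_mul_isBigO hw⟩

theorem isBigO_exp_of_linear_ode_of_neg (hβ : β < 0)
    (hside : Tendsto (fun t => exp (β * t) * u t) atTop (𝓝 0)) :
    u =O[atTop] fun t => exp (-α * t) := by
  have hγ : 0 < α - β := by linarith
  obtain ⟨L, hL⟩ := exists_sub_isBigO_of_deriv_isBigO_exp_neg (f := fun t => exp (β * t) * u t)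
    hγ (hu.mono fun t ht => hasDerivAt_exp_mul_of_linear_ode ht)
    (by simpa [sub_eq_add_neg, add_comm] using hh.exp_mul β)
  have hL0 : L = 0 := by
    refine tendsto_nhds_unique ?_ hside
    simpa using (hL.trans_tendsto (tendsto_exp_neg_mul_atTop hγ)).add_const L
  subst hL0
  convert isBigO_exp_of_exp_mul_isBigO (by simpa using hL) using 3
  ring

theorem exists_sub_isBigO_of_linear_ode
    (hside : β < 0 → Tendsto (fun t => exp (β * t) * u t) atTop (𝓝 0)) :
    ∃ c, (β ≠ 0 → c = 0) ∧ ∃ ε > 0, (fun t => u t - c) =O[atTop] fun t => exp (-ε * t) := by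
  rcases lt_trichotomy β 0 with hβ | rfl | hβ
  · exact ⟨0, fun _ => rfl, α, hα,
      by simpa using isBigO_exp_of_linear_ode_of_neg hα hu hh hβ (hside hβ)⟩
  · obtain ⟨c, hc⟩ := exists_sub_isBigO_of_deriv_isBigO_exp_neg hα
      (hu.mono fun t ht => by simpa using ht) hh
    exact ⟨c, fun hne => absurd rfl hne, α, hα, hc⟩
  · obtain ⟨ε, hε, hO⟩ := isBigO_exp_of_linear_ode_of_pos hα hu hh hβ
    exact ⟨0, fun _ => rfl, ε, hε, by simpa using hO⟩

end LinearODE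

theorem exists_sub_isBigO_of_diagonal_ode {ι : Type*} [Fintype ι] [DecidableEq ι]
    {D : ι → ℝ} {lam α : ℝ} (hα : 0 < α) {z h : ℝ → ι → ℝ}
    (hz : ∀ᶠ t in atTop, HasDerivAt z (-(diagonal D *ᵥ z t - lam • z t) + h t) t)
    (hh : h =O[atTop] fun t => exp (-α * t))
    (hside : ∀ i, D i < lam → Tendsto (fun t => exp ((D i - lam) * t) * z t i) atTop (𝓝 0)) :
    ∃ c, diagonal D *ᵥ c = lam • c ∧
      ∃ ε > 0, (fun t => z t - c) =O[atTop] fun t => exp (-ε * t) := by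
  have hcoord (i : ι) := exists_sub_isBigO_of_linear_ode (β := D i - lam) (u := fun t => z t i)
    (h := fun t => h t i) hα
    (hz.mono fun t ht => (hasDerivAt_pi.1 ht i).congr_deriv (by simp [mulVec_diagonal]; ring))
    (isBigO_pi.1 hh i) fun hi => hside i (sub_neg.1 hi)
  choose c hc ε hε hO using hcoord
  obtain ⟨δ, hδ, hδε⟩ : ∃ δ > 0, ∀ i, δ ≤ ε i :=
    ((eventually_mem_nhdsWithin (a := (0 : ℝ)) (s := Ioi 0)).and
      (eventually_all.2 fun i => Ioc_mem_nhdsGT (hε i))).exists.imp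
      fun _ hδ => ⟨hδ.1, fun i => (hδ.2 i).2⟩
  refine ⟨c, funext fun i => ?_, δ, hδ, isBigO_pi.2 fun i => ?_⟩
  · by_cases hi : D i = lam
    · simp [mulVec_diagonal, hi]
    · simp [mulVec_diagonal, hc i (sub_ne_zero.2 hi)]
  · exact (hO i).trans (isBigO_exp_mul_of_le (by linarith [hδε i]))

theorem exists_greatest_image_lt {ι : Type*} [Fintype ι] (D : ι → ℝ) {lam : ℝ} {i : ι}
    (hi : D i < lam) :
    ∃ lamBar, (lamBar ∈ Finset.image D Finset.univ ∧ lamBar < lam ∧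
      ∀ mu ∈ Finset.image D Finset.univ, mu < lam → mu ≤ lamBar) ∧ D i ≤ lamBar := by
  obtain ⟨j, hj, hjmax⟩ := Finset.exists_max_image (Finset.univ.filter (D · < lam)) D
    ⟨i, by simpa using hi⟩
  simp only [Finset.mem_filter, Finset.mem_univ, true_and] at hj hjmax
  exact ⟨D j, ⟨Finset.mem_image_of_mem D (Finset.mem_univ j), hj, by simpa using hjmax⟩,
    hjmax i hi⟩

theorem tendsto_exp_mul_of_isBigO {E : Type*} [NormedAddCommGroup E] {a b : ℝ} (hab : a ≤ b)
    {u : ℝ → ℝ} {v : ℝ → E} (huv : u =O[atTop] v)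
    (hv : Tendsto (fun t => exp (b * t) * ‖v t‖) atTop (𝓝 0)) :
    Tendsto (fun t => exp (a * t) * u t) atTop (𝓝 0) :=
  ((isBigO_exp_mul_of_le hab).mul (huv.trans (isBigO_norm_right.2 (isBigO_refl _ _)))).trans_tendsto
    hv

theorem stmt_13_general {d : ℕ} (A S : Matrix (Fin d) (Fin d) ℝ) (hS : IsUnit S.det)
    (d₀ : Fin d → ℝ)
    (hA : A = S⁻¹ * Matrix.diagonal d₀ * S)
    (lam : ℝ)
    (T : ℝ) (g : ℝ → EuclideanSpace ℝ (Fin d))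
    (α : ℝ) (hα : 0 < α)
    (hg : ∃ C T', ∀ t ≥ T', ‖g t‖ ≤ C * Real.exp (-α * t))
    (y : ℝ → EuclideanSpace ℝ (Fin d))
    (hy : ∀ t ∈ Ici T, HasDerivWithinAt y
      (-(Matrix.toEuclideanLin A (y t) - lam • y t) + g t) (Ici T) t)
    (hside : ∀ lamBar : ℝ,
      (lamBar ∈ Finset.image d₀ Finset.univ ∧ lamBar < lam ∧
        ∀ mu ∈ Finset.image d₀ Finset.univ, mu < lam → mu ≤ lamBar) →
      Filter.Tendsto (fun t => Real.exp ((lamBar - lam) * t) * ‖y t‖)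
        Filter.atTop (nhds 0)) :
    ∃ (ξ : EuclideanSpace ℝ (Fin d)) (ε : ℝ), Matrix.toEuclideanLin A ξ = lam • ξ ∧
      0 < ε ∧ ∃ C T', ∀ t ≥ T', ‖y t - ξ‖ ≤ C * Real.exp (-ε * t) := by
  let P : EuclideanSpace ℝ (Fin d) →L[ℝ] Fin d → ℝ :=
    (toLin' S).toContinuousLinearMap ∘L (EuclideanSpace.equiv (Fin d) ℝ).toContinuousLinearMap
  let Q : (Fin d → ℝ) →L[ℝ] EuclideanSpace ℝ (Fin d) :=
    (EuclideanSpace.equiv (Fin d) ℝ).symm.toContinuousLinearMap ∘L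
      (toLin' S⁻¹).toContinuousLinearMap
  have hQP (v) : Q (P v) = v := by
    simp [P, Q, PiLp.coe_continuousLinearEquiv, mulVec_mulVec, nonsing_inv_mul S hS]
  have hPA (v) : P (toEuclideanLin A v) = diagonal d₀ *ᵥ P v := by
    simp [P, toLpLin_apply, PiLp.coe_continuousLinearEquiv, hA, mulVec_mulVec,
      ← Matrix.mul_assoc, mul_nonsing_inv S hS]
  have hAQ (c) : toEuclideanLin A (Q c) = Q (diagonal d₀ *ᵥ c) := by
    simp [Q, toLpLin_apply, hA, mulVec_mulVec, Matrix.mul_assoc, mul_nonsing_inv S hS]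
  have hz : ∀ᶠ t in atTop, HasDerivAt (fun t => P (y t))
      (-(diagonal d₀ *ᵥ P (y t) - lam • P (y t)) + P (g t)) t := by
    filter_upwards [eventually_gt_atTop T] with t ht
    have := P.hasFDerivAt.comp_hasDerivAt t ((hy t ht.le).hasDerivAt (Ici_mem_nhds ht))
    rwa [map_add, map_neg, map_sub, map_smul, hPA] at this
  have hzside (i) (hi : d₀ i < lam) :
      Tendsto (fun t => exp ((d₀ i - lam) * t) * P (y t) i) atTop (𝓝 0) := by
    obtain ⟨lamBar, hlamBar, hle⟩ := exists_greatest_image_lt d₀ hi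
    exact tendsto_exp_mul_of_isBigO (by linarith)
      ((ContinuousLinearMap.proj i ∘L P).isBigO_comp y atTop) (hside lamBar hlamBar)
  obtain ⟨c, hc, ε, hε, hO⟩ := exists_sub_isBigO_of_diagonal_ode hα hz
    ((P.isBigO_comp g atTop).trans (isBigO_exp_iff.2 hg)) hzside
  refine ⟨Q c, ε, by rw [hAQ, hc, map_smul], hε, isBigO_exp_iff.1 ?_⟩
  simpa [hQP] using (Q.isBigO_comp _ atTop).trans hO

/-- Special case `p ≡ 0` of the approximation lemma: a solution of
`y' = -(A - λI)y + g(t)` with `g` exponentially decaying (plus the side condition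
when `λ > λ₁`) converges exponentially to a vector `ξ` with `(A - λI)ξ = 0`. -/
theorem stmt_13 {d : ℕ} (A S : Matrix (Fin d) (Fin d) ℝ) (hS : IsUnit S.det)
    (d₀ : Fin d → ℝ) (hpos : ∀ i, 0 < d₀ i)
    (hA : A = S⁻¹ * Matrix.diagonal d₀ * S)
    (lam : ℝ) (hlam : 0 < lam)
    (T : ℝ) (g : ℝ → EuclideanSpace ℝ (Fin d))
    (hgcont : ContinuousOn g (Ici T))
    (α : ℝ) (hα : 0 < α)
    (hg : ∃ C T', ∀ t ≥ T', ‖g t‖ ≤ C * Real.exp (-α * t))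
    (y : ℝ → EuclideanSpace ℝ (Fin d))
    (hy : ∀ t ∈ Ici T, HasDerivWithinAt y
      (-(Matrix.toEuclideanLin A (y t) - lam • y t) + g t) (Ici T) t)
    (hside : ∀ lamBar : ℝ,
      (lamBar ∈ Finset.image d₀ Finset.univ ∧ lamBar < lam ∧
        ∀ mu ∈ Finset.image d₀ Finset.univ, mu < lam → mu ≤ lamBar) →
      Filter.Tendsto (fun t => Real.exp ((lamBar - lam) * t) * ‖y t‖)
        Filter.atTop (nhds 0)) :
    ∃ (ξ : EuclideanSpace ℝ (Fin d)) (ε : ℝ), Matrix.toEuclideanLin A ξ = lam • ξ ∧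
      0 < ε ∧ ∃ C T', ∀ t ≥ T', ‖y t - ξ‖ ≤ C * Real.exp (-ε * t) :=
  stmt_13_general A S hS d₀ hA lam T g α hα hg y hy hside
end

section
/- Let P₀ : ℝᵈ → ℝᵈ be a homogeneous polynomial of degree m₀ ≥ 0, s ≥ 1, and for j = 1,…,s let P_j : ℝᵈ → ℝ^{n_j} be a homogeneous polynomial of degree m_j ≥ 1 whose only zero is the origin, p_j ≥ 2 an even integer, and ν_j > 0 with min_j ν_j + m₀ > 1. Then F(x) = ‖P₁(x)‖_{p₁}^{ν₁} ⋯ ‖P_s(x)‖_{p_s}^{ν_s} P₀(x) is continuously differentiable on ℝᵈ with DF(0) = 0. -/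
open scoped BigOperators

/-- The `ℓ^p` norm of `y ∈ ℝⁿ` (for a real exponent `p ≥ 1`). -/
noncomputable def lpNorm {n : ℕ} (p : ℝ) (y : Fin n → ℝ) : ℝ :=
  (∑ i, |y i| ^ p) ^ (1 / p)

/-!
`F` is positively homogeneous of degree `β = ∑ m_j ν_j + m₀ > 1`, and smooth away from the origin
because `‖P_j x‖_{p_j} ^ p_j` is a polynomial that is positive there. The derivative of such a
function is homogeneous of degree `β - 1 > 0`, and compactness of the unit sphere gives
`‖F x‖ ≤ C ‖x‖ ^ β` and `‖DF x‖ ≤ C' ‖x‖ ^ (β - 1)`; hence `DF 0 = 0` and `DF` is continuous at `0`.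
-/

open Filter Topology

def IsPosHomogeneous {V W : Type*} [SMul ℝ V] [SMul ℝ W] (F : V → W) (β : ℝ) : Prop :=
  ∀ c : ℝ, 0 < c → ∀ x, F (c • x) = c ^ β • F x

namespace IsPosHomogeneous

section Algebra

variable {V : Type*} [SMul ℝ V]

theorem smul {W : Type*} [AddCommMonoid W] [Module ℝ W] {f : V → ℝ} {F : V → W} {a β : ℝ}
    (hf : IsPosHomogeneous f a) (hF : IsPosHomogeneous F β) :
    IsPosHomogeneous (fun x => f x • F x) (a + β) := by
  intro c hc x
  dsimp only
  rw [hf c hc, hF c hc, smul_smul, smul_smul, Real.rpow_add hc]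
  ring_nf

theorem prod {ι : Type*} (s : Finset ι) {f : ι → V → ℝ} {a : ι → ℝ}
    (hf : ∀ j ∈ s, IsPosHomogeneous (f j) (a j)) :
    IsPosHomogeneous (fun x => ∏ j ∈ s, f j x) (∑ j ∈ s, a j) := by
  intro c hc x
  rw [smul_eq_mul, Real.rpow_sum_of_pos hc, ← Finset.prod_mul_distrib]
  exact Finset.prod_congr rfl fun j hj => hf j hj c hc x

theorem rpow {f : V → ℝ} {a : ℝ} (hf : IsPosHomogeneous f a) (hf0 : ∀ x, 0 ≤ f x) (r : ℝ) :
    IsPosHomogeneous (fun x => f x ^ r) (a * r) := by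
  intro c hc x
  dsimp only
  rw [hf c hc, smul_eq_mul, smul_eq_mul, Real.mul_rpow (by positivity) (hf0 x),
    Real.rpow_mul hc.le]

theorem pi {ι : Type*} {W : ι → Type*} [∀ i, SMul ℝ (W i)] {F : V → ∀ i, W i} {β : ℝ}
    (hF : ∀ i, IsPosHomogeneous (fun x => F x i) β) : IsPosHomogeneous F β :=
  fun c hc x => funext fun i => hF i c hc x

end Algebra

section Analysis

variable {V W : Type*} [NormedAddCommGroup V] [NormedSpace ℝ V]
  [NormedAddCommGroup W] [NormedSpace ℝ W] {F : V → W} {β : ℝ}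

theorem map_zero (hF : IsPosHomogeneous F β) (hβ : β ≠ 0) : F 0 = 0 := by
  have h := hF 2 two_pos 0
  rw [smul_zero] at h
  have h2 : (2 : ℝ) ^ β - 1 ≠ 0 := by
    rcases hβ.lt_or_gt with hβ | hβ
    · linarith [Real.rpow_lt_one_of_one_lt_of_neg one_lt_two hβ]
    · linarith [Real.one_lt_rpow one_lt_two hβ]
  have : ((2 : ℝ) ^ β - 1) • F 0 = 0 := by rw [sub_smul, one_smul, ← h, sub_self]
  exact (smul_eq_zero.mp this).resolve_left h2

theorem fderiv (hF : IsPosHomogeneous F β) : IsPosHomogeneous (_root_.fderiv ℝ F) (β - 1) := by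
  intro c hc x
  have h : c • _root_.fderiv ℝ F (c • x) = c ^ β • _root_.fderiv ℝ F x := by
    rw [← fderiv_comp_smul, ← Pi.smul_apply (c ^ β) (_root_.fderiv ℝ F), ← fderiv_const_smul_field]
    congr 1
    exact funext (hF c hc)
  rw [Real.rpow_sub_one hc.ne', div_eq_inv_mul, mul_smul, ← h, inv_smul_smul₀ hc.ne']

theorem exists_norm_le [FiniteDimensional ℝ V] (hF : IsPosHomogeneous F β)
    (hc : ContinuousOn F {0}ᶜ) : ∃ C, ∀ x, x ≠ 0 → ‖F x‖ ≤ C * ‖x‖ ^ β := by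
  have hsphere : Metric.sphere (0 : V) 1 ⊆ {0}ᶜ := fun x hx h => by
    simp [show x = 0 from h] at hx
  obtain ⟨C, hC⟩ := (isCompact_sphere (0 : V) 1).exists_bound_of_continuousOn (hc.mono hsphere)
  refine ⟨C, fun x hx => ?_⟩
  have hn : 0 < ‖x‖ := norm_pos_iff.mpr hx
  have hu : ‖x‖⁻¹ • x ∈ Metric.sphere (0 : V) 1 := by
    rw [mem_sphere_zero_iff_norm, norm_smul, norm_inv, norm_norm, inv_mul_cancel₀ hn.ne']
  have hFx : F x = ‖x‖ ^ β • F (‖x‖⁻¹ • x) := by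
    rw [← hF _ hn, smul_smul, mul_inv_cancel₀ hn.ne', one_smul]
  rw [hFx, norm_smul, Real.norm_of_nonneg (by positivity), mul_comm]
  exact mul_le_mul_of_nonneg_right (hC _ hu) (by positivity)

theorem tendsto_zero [FiniteDimensional ℝ V] (hF : IsPosHomogeneous F β) (hβ : 0 < β)
    (hc : ContinuousOn F {0}ᶜ) : Tendsto F (𝓝 0) (𝓝 0) := by
  obtain ⟨C, hC⟩ := hF.exists_norm_le hc
  have hbound : ∀ x, ‖F x‖ ≤ C * ‖x‖ ^ β := fun x => by
    rcases eq_or_ne x 0 with rfl | hx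
    · simp [hF.map_zero hβ.ne', Real.zero_rpow hβ.ne']
    · exact hC x hx
  have hlim : Tendsto (fun x : V => C * ‖x‖ ^ β) (𝓝 0) (𝓝 0) := by
    simpa [Real.zero_rpow hβ.ne'] using
      ((continuous_norm.tendsto (0 : V)).rpow_const (Or.inr hβ.le)).const_mul C
  exact squeeze_zero_norm hbound hlim

theorem hasFDerivAt_zero [FiniteDimensional ℝ V] (hF : IsPosHomogeneous F β) (hβ : 1 < β)
    (hc : ContinuousOn F {0}ᶜ) : HasFDerivAt F (0 : V →L[ℝ] W) 0 := by
  have hinv : IsPosHomogeneous (fun x : V => ‖x‖⁻¹) (-1) := fun c hc x => by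
    dsimp only
    rw [norm_smul, Real.norm_of_nonneg hc.le, mul_inv, Real.rpow_neg_one, smul_eq_mul]
  have hquot := (hinv.smul hF).tendsto_zero (by linarith)
    ((continuous_norm.continuousOn.inv₀ fun x hx => norm_ne_zero_iff.mpr hx).smul hc)
  rw [hasFDerivAt_iff_tendsto]
  simpa [hF.map_zero (by linarith), norm_smul] using hquot.norm

theorem contDiff_one [FiniteDimensional ℝ V] (hF : IsPosHomogeneous F β) (hβ : 1 < β)
    (hF1 : ContDiffOn ℝ 1 F {0}ᶜ) : ContDiff ℝ 1 F ∧ _root_.fderiv ℝ F 0 = 0 := by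
  have h0 := hF.hasFDerivAt_zero hβ hF1.continuousOn
  have hdiff : Differentiable ℝ F := fun x => by
    rcases eq_or_ne x 0 with rfl | hx
    · exact h0.differentiableAt
    · exact (hF1.differentiableOn one_ne_zero).differentiableAt
        (isOpen_compl_singleton.mem_nhds hx)
  have hderiv := hF1.continuousOn_fderiv_of_isOpen isOpen_compl_singleton le_rfl
  have hcont : Continuous (_root_.fderiv ℝ F) := continuous_iff_continuousAt.mpr fun x => by
    rcases eq_or_ne x 0 with rfl | hx
    · rw [ContinuousAt, h0.fderiv]
      exact hF.fderiv.tendsto_zero (by linarith) hderiv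
    · exact hderiv.continuousAt (isOpen_compl_singleton.mem_nhds hx)
  exact ⟨contDiff_one_iff_fderiv.mpr ⟨hdiff, hcont⟩, h0.fderiv⟩

end Analysis

end IsPosHomogeneous

namespace MvPolynomial

theorem IsHomogeneous.eval_smul {σ R : Type*} [CommSemiring R] {q : MvPolynomial σ R} {k : ℕ}
    (hq : q.IsHomogeneous k) (c : R) (x : σ → R) : eval (c • x) q = c ^ k * eval x q := by
  rw [eval_eq, eval_eq, Finset.mul_sum]
  refine Finset.sum_congr rfl fun e he => ?_
  have hdeg : ∑ i ∈ e.support, e i = k := by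
    simpa [Finsupp.weight_apply, Finsupp.sum] using hq (mem_support_iff.mp he)
  simp only [Pi.smul_apply, smul_eq_mul, mul_pow, Finset.prod_mul_distrib,
    Finset.prod_pow_eq_pow_sum, hdeg]
  ring

theorem IsHomogeneous.isPosHomogeneous_eval {σ : Type*} {q : MvPolynomial σ ℝ} {k : ℕ}
    (hq : q.IsHomogeneous k) : IsPosHomogeneous (fun x : σ → ℝ => eval x q) k :=
  fun c _ x => by dsimp only; rw [hq.eval_smul, Real.rpow_natCast, smul_eq_mul]

theorem contDiff_eval {𝕜 σ : Type*} [NontriviallyNormedField 𝕜] [Fintype σ] {n : WithTop ℕ∞}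
    (q : MvPolynomial σ 𝕜) : ContDiff 𝕜 n fun x : σ → 𝕜 => eval x q :=
  (AnalyticOnNhd.eval_continuousLinearMap (B := 𝕜) (ContinuousLinearMap.id 𝕜 (σ → 𝕜)) q).contDiff

end MvPolynomial

theorem lpNorm_rpow_of_even {n p : ℕ} (hp : Even p) (y : Fin n → ℝ) (ν : ℝ) :
    lpNorm p y ^ ν = (∑ i, y i ^ p) ^ (ν / p) := by
  have hsum : ∑ i, |y i| ^ (p : ℝ) = ∑ i, y i ^ p :=
    Finset.sum_congr rfl fun i _ => by rw [Real.rpow_natCast, hp.pow_abs]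
  rw [lpNorm, hsum, ← Real.rpow_mul (Finset.sum_nonneg fun i _ => hp.pow_nonneg _), one_div,
    inv_mul_eq_div]

theorem sum_pow_pos_of_even {n p : ℕ} (hp : Even p) {y : Fin n → ℝ} (hy : y ≠ 0) :
    0 < ∑ i, y i ^ p := by
  obtain ⟨i, hi⟩ := Function.ne_iff.mp hy
  exact Finset.sum_pos' (fun i _ => hp.pow_nonneg _) ⟨i, Finset.mem_univ _, hp.pow_pos hi⟩

section PolynomialMap

variable {σ : Type*} {n p k : ℕ} {Q : Fin n → MvPolynomial σ ℝ}

theorem isPosHomogeneous_lpNorm_eval_rpow (hQ : ∀ i, (Q i).IsHomogeneous k) (hp : Even p)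
    (hp0 : p ≠ 0) (ν : ℝ) :
    IsPosHomogeneous (fun x => lpNorm p (fun i => MvPolynomial.eval x (Q i)) ^ ν) (k * ν) := by
  have hsum := MvPolynomial.IsHomogeneous.sum Finset.univ _ _ fun i _ => (hQ i).pow p
  have h := hsum.isPosHomogeneous_eval.rpow
    (fun x => by simpa using Finset.sum_nonneg fun i _ => hp.pow_nonneg _) (ν / p)
  simp only [lpNorm_rpow_of_even hp]
  convert h using 1
  · simp
  · have : (p : ℝ) ≠ 0 := Nat.cast_ne_zero.mpr hp0
    push_cast
    field_simp

theorem contDiffAt_lpNorm_eval_rpow [Fintype σ] {N : WithTop ℕ∞} (hp : Even p) (ν : ℝ)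
    {x : σ → ℝ} (hx : (fun i => MvPolynomial.eval x (Q i)) ≠ 0) :
    ContDiffAt ℝ N (fun x => lpNorm p (fun i => MvPolynomial.eval x (Q i)) ^ ν) x := by
  simp only [lpNorm_rpow_of_even hp]
  refine ContDiffAt.rpow_const_of_ne ?_ (sum_pow_pos_of_even hp hx).ne'
  exact ContDiffAt.sum fun i _ => (MvPolynomial.contDiff_eval (Q i)).contDiffAt.pow p

end PolynomialMap

theorem stmt_16_general {d s : ℕ} (n : Fin s → ℕ)
    (m₀ : ℕ) (Q₀ : Fin d → MvPolynomial (Fin d) ℝ)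
    (hQ₀hom : ∀ i, (Q₀ i).IsHomogeneous m₀)
    (P₀ : (Fin d → ℝ) → (Fin d → ℝ))
    (hP₀ : ∀ x i, P₀ x i = MvPolynomial.eval x (Q₀ i))
    (m : Fin s → ℕ) (hm : ∀ j, 1 ≤ m j)
    (Q : ∀ j : Fin s, Fin (n j) → MvPolynomial (Fin d) ℝ)
    (hQhom : ∀ j i, (Q j i).IsHomogeneous (m j))
    (P : ∀ j : Fin s, (Fin d → ℝ) → (Fin (n j) → ℝ))
    (hP : ∀ j x i, P j x i = MvPolynomial.eval x (Q j i))
    (hPzero : ∀ j x, P j x = 0 → x = 0)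
    (p : Fin s → ℕ) (hpeven : ∀ j, Even (p j)) (hp2 : ∀ j, 2 ≤ p j)
    (ν : Fin s → ℝ) (hν : ∀ j, 0 < ν j)
    (νbar : ℝ) (hνbar : (∀ j, νbar ≤ ν j) ∧ ∃ j, ν j = νbar)
    (hdeg : 1 < νbar + m₀)
    (F : (Fin d → ℝ) → (Fin d → ℝ))
    (hF : ∀ x, F x = (∏ j, lpNorm (p j : ℝ) (P j x) ^ ν j) • P₀ x) :
    ContDiff ℝ 1 F ∧ fderiv ℝ F 0 = 0 := by
  have hPeval : P = fun j x i => MvPolynomial.eval x (Q j i) := by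
    funext j x i
    exact hP j x i
  have hP₀eval : P₀ = fun x i => MvPolynomial.eval x (Q₀ i) := funext fun x => funext (hP₀ x)
  have hFeq : F = fun x => (∏ j, lpNorm (p j) (P j x) ^ ν j) • P₀ x := funext hF
  subst hPeval hP₀eval
  have hhom : IsPosHomogeneous F (∑ j, (m j : ℝ) * ν j + m₀) :=
    hFeq ▸ (IsPosHomogeneous.prod _ fun j _ => isPosHomogeneous_lpNorm_eval_rpow (hQhom j)
      (hpeven j) (by have := hp2 j; omega) (ν j)).smul
      (IsPosHomogeneous.pi fun i => (hQ₀hom i).isPosHomogeneous_eval)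
  have hβ : 1 < ∑ j, (m j : ℝ) * ν j + m₀ := by
    obtain ⟨j₀, hj₀⟩ := hνbar.2
    have : ν j₀ ≤ ∑ j, (m j : ℝ) * ν j := calc
      ν j₀ ≤ m j₀ * ν j₀ := le_mul_of_one_le_left (hν j₀).le (by exact_mod_cast hm j₀)
      _ ≤ ∑ j, (m j : ℝ) * ν j := Finset.single_le_sum (f := fun j => (m j : ℝ) * ν j)
        (fun j _ => mul_nonneg (Nat.cast_nonneg _) (hν j).le) (Finset.mem_univ j₀)
    linarith
  have hsmooth : ContDiffOn ℝ 1 F {0}ᶜ := fun x hx => by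
    rw [hFeq]
    refine ContDiffAt.contDiffWithinAt ?_
    refine ContDiffAt.smul (contDiffAt_prod (𝕜 := ℝ) (𝔸' := ℝ) fun j _ =>
      contDiffAt_lpNorm_eval_rpow (hpeven j) (ν j) fun h => hx (hPzero j x h)) ?_
    exact (contDiff_pi.mpr fun i => MvPolynomial.contDiff_eval (Q₀ i)).contDiffAt
  exact hhom.contDiff_one hβ hsmooth

/-- For `F(x) = ‖P₁(x)‖_{p₁}^{ν₁} ⋯ ‖P_s(x)‖_{p_s}^{ν_s} • P₀(x)`, with each `P_j`
a homogeneous polynomial of degree `m_j ≥ 1` vanishing only at the origin, each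
`p_j ≥ 2` even, and `min_j ν_j + m₀ > 1`, the function `F` is continuously
differentiable on `ℝᵈ` with `DF(0) = 0`. -/
theorem stmt_16 {d s : ℕ} (hs : 1 ≤ s) (n : Fin s → ℕ)
    (m₀ : ℕ) (Q₀ : Fin d → MvPolynomial (Fin d) ℝ)
    (hQ₀hom : ∀ i, (Q₀ i).IsHomogeneous m₀)
    (P₀ : (Fin d → ℝ) → (Fin d → ℝ))
    (hP₀ : ∀ x i, P₀ x i = MvPolynomial.eval x (Q₀ i))
    (m : Fin s → ℕ) (hm : ∀ j, 1 ≤ m j)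
    (Q : ∀ j : Fin s, Fin (n j) → MvPolynomial (Fin d) ℝ)
    (hQhom : ∀ j i, (Q j i).IsHomogeneous (m j))
    (P : ∀ j : Fin s, (Fin d → ℝ) → (Fin (n j) → ℝ))
    (hP : ∀ j x i, P j x i = MvPolynomial.eval x (Q j i))
    (hPzero : ∀ j x, P j x = 0 → x = 0)
    (p : Fin s → ℕ) (hpeven : ∀ j, Even (p j)) (hp2 : ∀ j, 2 ≤ p j)
    (ν : Fin s → ℝ) (hν : ∀ j, 0 < ν j)
    (νbar : ℝ) (hνbar : (∀ j, νbar ≤ ν j) ∧ ∃ j, ν j = νbar)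
    (hdeg : 1 < νbar + m₀)
    (F : (Fin d → ℝ) → (Fin d → ℝ))
    (hF : ∀ x, F x = (∏ j, lpNorm (p j : ℝ) (P j x) ^ ν j) • P₀ x) :
    ContDiff ℝ 1 F ∧ fderiv ℝ F 0 = 0 :=
  stmt_16_general n m₀ Q₀ hQ₀hom P₀ hP₀ m hm Q hQhom P hP hPzero p hpeven hp2 ν hν νbar hνbar hdeg F
    hF
end
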